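/- arXiv:2005.02752 — 6 statements merged into one kernel-verified Lean document; each statement's English description precedes it below -/
import Mathlib

section
/- A strategy profile σ for a 2-type Swap Schelling Game is a swap equilibrium if and only if for any two agents i and j of different colors with deg(σ(i)) ≤ deg(σ(j)), the sum of their utilities satisfies U_i(σ) + U_j(σ) ≥ 1 − 1_{ij}(σ)/deg(σ(i)), where 1_{ij}(σ) = 1 if agents i and j occupy adjacent vertices and 0 otherwise. -/
open SimpleGraph Finset
open scoped Classical

noncomputable def ssgUtil {V A : Type*} [Fintype V] [DecidableEq V]
    (G : SimpleGraph V) [DecidableRel G.Adj]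
    {k : ℕ} (c : A → Fin k) (σ : A ≃ V) (i : A) : ℚ :=
  (((G.neighborFinset (σ i)).filter (fun v => c (σ.symm v) = c i)).card : ℚ) /
    (G.degree (σ i) : ℚ)

def ssgSwap {V A : Type*} [DecidableEq V] (σ : A ≃ V) (i j : A) : A ≃ V :=
  σ.trans (Equiv.swap (σ i) (σ j))

def ssgProfitable {V A : Type*} [Fintype V] [DecidableEq V]
    (G : SimpleGraph V) [DecidableRel G.Adj]
    {k : ℕ} (c : A → Fin k) (σ : A ≃ V) (i j : A) : Prop :=
  c i ≠ c j ∧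
    ssgUtil G c σ i < ssgUtil G c (ssgSwap σ i j) i ∧
    ssgUtil G c σ j < ssgUtil G c (ssgSwap σ i j) j

def ssgEquilibrium {V A : Type*} [Fintype V] [DecidableEq V]
    (G : SimpleGraph V) [DecidableRel G.Adj]
    {k : ℕ} (c : A → Fin k) (σ : A ≃ V) : Prop :=
  ∀ i j : A, ¬ ssgProfitable G c σ i j

def ssgLocalEquilibrium {V A : Type*} [Fintype V] [DecidableEq V]
    (G : SimpleGraph V) [DecidableRel G.Adj]
    {k : ℕ} (c : A → Fin k) (σ : A ≃ V) : Prop :=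
  ∀ i j : A, G.Adj (σ i) (σ j) → ¬ ssgProfitable G c σ i j

noncomputable def ssgWelfare {V A : Type*} [Fintype V] [DecidableEq V] [Fintype A]
    (G : SimpleGraph V) [DecidableRel G.Adj]
    {k : ℕ} (c : A → Fin k) (σ : A ≃ V) : ℚ :=
  ∑ i : A, ssgUtil G c σ i

noncomputable def ssgPhi {V A : Type*} [Fintype V] [DecidableEq V]
    (G : SimpleGraph V) [DecidableRel G.Adj]
    {k : ℕ} (c : A → Fin k) (σ : A ≃ V) : ℕ :=
  (G.edgeFinset.filter (fun e => ∀ u ∈ e, ∀ v ∈ e, c (σ.symm u) = c (σ.symm v))).card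


lemma fin2_aux : ∀ a b t : Fin 2, a ≠ b → (¬ t = b ↔ t = a) := by decide

lemma ssgSwap_comm {V A : Type*} [DecidableEq V] (σ : A ≃ V) (i j : A) :
    ssgSwap σ i j = ssgSwap σ j i := by
  simp [ssgSwap, Equiv.swap_comm]

lemma ssgUtil_swap {V A : Type*} [Fintype V] [DecidableEq V]
    (G : SimpleGraph V) [DecidableRel G.Adj]
    (c : A → Fin 2) (σ : A ≃ V) (i j : A) (hc : c i ≠ c j)
    (hd : 0 < G.degree (σ j)) :
    ssgUtil G c (ssgSwap σ i j) i =
      1 - ssgUtil G c σ j -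
        (if G.Adj (σ i) (σ j) then (1 : ℚ) else 0) / (G.degree (σ j) : ℚ) := by
  have hij : i ≠ j := fun h => hc (h ▸ rfl)
  have hxy : σ i ≠ σ j := fun h => hij (σ.injective h)
  have happ : ssgSwap σ i j i = σ j := by
    simp [ssgSwap]
  have hsymm : ∀ v, (ssgSwap σ i j).symm v = σ.symm (Equiv.swap (σ i) (σ j) v) := by
    intro v; simp [ssgSwap]
  set x := σ i with hx
  set y := σ j with hy
  set S := G.neighborFinset y with hS
  set T := S.filter (fun v => c (σ.symm v) = c i) with hT
  set B := S.filter (fun v => c (σ.symm v) = c j) with hB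
  have hfilter : S.filter (fun v => c ((ssgSwap σ i j).symm v) = c i) = T.erase x := by
    ext v
    simp only [hT, Finset.mem_erase, Finset.mem_filter, hsymm]
    constructor
    · rintro ⟨hvS, hv⟩
      have hvy : v ≠ y := by
        intro h; subst h
        exact (G.notMem_neighborFinset_self y) hvS
      have hvx : v ≠ x := by
        intro h; subst h
        rw [Equiv.swap_apply_left] at hv
        simp only [hy, Equiv.symm_apply_apply] at hv
        exact hc hv.symm
      rw [Equiv.swap_apply_of_ne_of_ne hvx hvy] at hv
      exact ⟨hvx, hvS, hv⟩
    · rintro ⟨hvx, hvS, hv⟩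
      have hvy : v ≠ y := by
        intro h; subst h
        exact (G.notMem_neighborFinset_self y) hvS
      rw [Equiv.swap_apply_of_ne_of_ne hvx hvy]
      exact ⟨hvS, hv⟩
  have hBeq : B = S.filter (fun v => ¬ c (σ.symm v) = c i) := by
    rw [hB]
    apply Finset.filter_congr
    intro v _
    exact (fin2_aux (c j) (c i) (c (σ.symm v)) (Ne.symm hc)).symm
  have hTB : T.card + B.card = S.card := by
    rw [hT, hBeq]
    exact Finset.card_filter_add_card_filter_not _
  have hxT : x ∈ T ↔ G.Adj x y := by
    simp only [hT, Finset.mem_filter, hS, SimpleGraph.mem_neighborFinset, hx,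
      Equiv.symm_apply_apply, and_true, G.adj_comm]
  have hdeg : (S.card : ℚ) = (G.degree y : ℚ) := by
    rw [hS]; norm_cast
  have hcount : ((T.erase x).card : ℚ)
      = (S.card : ℚ) - B.card - (if G.Adj x y then (1:ℚ) else 0) := by
    by_cases hadj : G.Adj x y
    · have hxT' : x ∈ T := hxT.mpr hadj
      have := Finset.card_erase_add_one hxT'
      simp only [hadj, if_true]
      have : ((T.erase x).card : ℚ) + 1 = T.card := by exact_mod_cast this
      have h2 : (T.card : ℚ) + B.card = S.card := by exact_mod_cast hTB
      linarith
    · have hxT' : x ∉ T := fun h => hadj (hxT.mp h)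
      rw [Finset.erase_eq_of_notMem hxT']
      simp only [hadj, if_false]
      have h2 : (T.card : ℚ) + B.card = S.card := by exact_mod_cast hTB
      linarith
  have hdq : (G.degree y : ℚ) ≠ 0 := by positivity
  rw [ssgUtil, happ, ssgUtil, hfilter, hcount, hdeg]
  rw [← hy, ← hS, ← hB]
  field_simp

theorem stmt0 {V A : Type*} [Fintype V] [DecidableEq V] [Fintype A]
    (G : SimpleGraph V) [DecidableRel G.Adj] (hconn : G.Connected)
    (c : A → Fin 2) (σ : A ≃ V) :
    ssgEquilibrium G c σ ↔
      ∀ i j : A, c i ≠ c j → G.degree (σ i) ≤ G.degree (σ j) →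
        ssgUtil G c σ i + ssgUtil G c σ j ≥
          1 - (if G.Adj (σ i) (σ j) then (1 : ℚ) else 0) / (G.degree (σ i) : ℚ) := by
  have hpos : ∀ i j : A, c i ≠ c j → 0 < G.degree (σ i) := by
    intro i j hc
    have hij : i ≠ j := fun h => hc (h ▸ rfl)
    have hxy : σ i ≠ σ j := fun h => hij (σ.injective h)
    rw [G.degree_pos_iff_exists_adj]
    obtain ⟨p⟩ := hconn (σ i) (σ j)
    exact ⟨p.getVert 1, p.adj_snd (SimpleGraph.Walk.not_nil_of_ne hxy)⟩
  constructor
  · intro heq i j hc hdeg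
    have hdi : 0 < G.degree (σ i) := hpos i j hc
    have hdj : 0 < G.degree (σ j) := hpos j i hc.symm
    have hdiq : (0:ℚ) < (G.degree (σ i) : ℚ) := by exact_mod_cast hdi
    have hdjq : (0:ℚ) < (G.degree (σ j) : ℚ) := by exact_mod_cast hdj
    have hne := heq i j
    rw [ssgProfitable] at hne
    push_neg at hne
    have hne' := hne hc
    rw [ssgUtil_swap G c σ i j hc hdj] at hne'
    rw [ssgSwap_comm, ssgUtil_swap G c σ j i hc.symm hdi] at hne'
    simp only [G.adj_comm (σ j) (σ i)] at hne'
    set e : ℚ := if G.Adj (σ i) (σ j) then (1:ℚ) else 0 with he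
    have hee : e / (G.degree (σ j) : ℚ) ≤ e / (G.degree (σ i) : ℚ) := by
      apply div_le_div_of_nonneg_left _ hdiq
      · exact_mod_cast hdeg
      · rw [he]; split_ifs <;> norm_num
    by_cases h1 : ssgUtil G c σ i < 1 - ssgUtil G c σ j - e / (G.degree (σ j) : ℚ)
    · have h2 := hne' h1
      linarith
    · push_neg at h1
      linarith
  · rintro hcond i j ⟨hc, h1, h2⟩
    have hdi : 0 < G.degree (σ i) := hpos i j hc
    have hdj : 0 < G.degree (σ j) := hpos j i hc.symm
    have hdiq : (0:ℚ) < (G.degree (σ i) : ℚ) := by exact_mod_cast hdi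
    have hdjq : (0:ℚ) < (G.degree (σ j) : ℚ) := by exact_mod_cast hdj
    rw [ssgUtil_swap G c σ i j hc hdj] at h1
    rw [ssgSwap_comm, ssgUtil_swap G c σ j i hc.symm hdi] at h2
    simp only [G.adj_comm (σ j) (σ i)] at h2
    rcases le_total (G.degree (σ i)) (G.degree (σ j)) with hle | hle
    · have := hcond i j hc hle
      linarith
    · have := hcond j i hc.symm hle
      simp only [G.adj_comm (σ j) (σ i)] at this
      linarith
end

section
/- In a k-type Swap Schelling Game (k ≥ 2), if agents i and j perform a profitable swap in strategy profile σ with deg(σ(i)) ≤ deg(σ(j)) and deg(σ(j)) − deg(σ(i)) ≤ 1, then the number of monochromatic edges strictly increases: Φ(σ_ij) > Φ(σ), where σ_ij is the profile after the swap. -/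
open SimpleGraph Finset
open scoped Classical

lemma ssg_count_vert {V : Type*} [Fintype V] [DecidableEq V]
    (G : SimpleGraph V) [DecidableRel G.Adj] {k : ℕ} (f : V → Fin k) (u : V) :
    G.edgeFinset.filter (fun e => (∀ x ∈ e, ∀ y ∈ e, f x = f y) ∧ u ∈ e)
      = ((G.neighborFinset u).filter (fun z => f z = f u)).image (fun z => s(u, z)) := by
  ext e
  simp only [Finset.mem_filter, Finset.mem_image, mem_edgeFinset, mem_neighborFinset]
  constructor
  · rintro ⟨he, hmono, hu⟩
    refine ⟨Sym2.Mem.other hu, ⟨?_, ?_⟩, Sym2.other_spec hu⟩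
    · have := Sym2.other_spec hu
      rw [← this] at he
      exact (SimpleGraph.mem_edgeSet G).mp he
    · exact hmono _ (Sym2.other_mem hu) u hu
  · rintro ⟨z, ⟨hadj, hfz⟩, rfl⟩
    refine ⟨(SimpleGraph.mem_edgeSet G).mpr hadj, ?_, Sym2.mem_mk_left u z⟩
    intro x hx y hy
    rw [Sym2.mem_iff] at hx hy
    rcases hx with rfl | rfl <;> rcases hy with rfl | rfl <;> simp [hfz]

lemma ssg_count_vert_card {V : Type*} [Fintype V] [DecidableEq V]
    (G : SimpleGraph V) [DecidableRel G.Adj] {k : ℕ} (f : V → Fin k) (u : V) :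
    (G.edgeFinset.filter (fun e => (∀ x ∈ e, ∀ y ∈ e, f x = f y) ∧ u ∈ e)).card
      = ((G.neighborFinset u).filter (fun z => f z = f u)).card := by
  rw [ssg_count_vert]
  apply Finset.card_image_of_injOn
  intro z1 _ z2 _ h
  exact Sym2.congr_right.mp h

lemma ssg_count_touch {V : Type*} [Fintype V] [DecidableEq V]
    (G : SimpleGraph V) [DecidableRel G.Adj] {k : ℕ} (f : V → Fin k) (u v : V)
    (hf : f u ≠ f v) :
    (G.edgeFinset.filter (fun e => (∀ x ∈ e, ∀ y ∈ e, f x = f y) ∧ (u ∈ e ∨ v ∈ e))).card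
      = ((G.neighborFinset u).filter (fun z => f z = f u)).card
        + ((G.neighborFinset v).filter (fun z => f z = f v)).card := by
  have hsplit : G.edgeFinset.filter (fun e => (∀ x ∈ e, ∀ y ∈ e, f x = f y) ∧ (u ∈ e ∨ v ∈ e))
      = G.edgeFinset.filter (fun e => (∀ x ∈ e, ∀ y ∈ e, f x = f y) ∧ u ∈ e)
        ∪ G.edgeFinset.filter (fun e => (∀ x ∈ e, ∀ y ∈ e, f x = f y) ∧ v ∈ e) := by
    rw [← Finset.filter_or]
    apply Finset.filter_congr
    intro e _
    constructor
    · rintro ⟨hm, h | h⟩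
      · exact Or.inl ⟨hm, h⟩
      · exact Or.inr ⟨hm, h⟩
    · rintro (⟨hm, h⟩ | ⟨hm, h⟩)
      · exact ⟨hm, Or.inl h⟩
      · exact ⟨hm, Or.inr h⟩
  rw [hsplit, Finset.card_union_of_disjoint, ssg_count_vert_card, ssg_count_vert_card]
  rw [Finset.disjoint_left]
  intro e he1 he2
  rw [Finset.mem_filter] at he1 he2
  obtain ⟨-, hm, hu⟩ := he1
  obtain ⟨-, -, hv⟩ := he2
  exact hf (hm u hu v hv)

lemma ssg_phi_split {V : Type*} [Fintype V] [DecidableEq V]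
    (G : SimpleGraph V) [DecidableRel G.Adj] {k : ℕ} (f : V → Fin k) (u v : V)
    (hf : f u ≠ f v) :
    (G.edgeFinset.filter (fun e => ∀ x ∈ e, ∀ y ∈ e, f x = f y)).card
      = ((G.neighborFinset u).filter (fun z => f z = f u)).card
        + ((G.neighborFinset v).filter (fun z => f z = f v)).card
        + (G.edgeFinset.filter
            (fun e => (∀ x ∈ e, ∀ y ∈ e, f x = f y) ∧ ¬(u ∈ e ∨ v ∈ e))).card := by
  have h := Finset.card_filter_add_card_filter_not
    (s := G.edgeFinset.filter (fun e => ∀ x ∈ e, ∀ y ∈ e, f x = f y))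
    (p := fun e => u ∈ e ∨ v ∈ e)
  rw [Finset.filter_filter, Finset.filter_filter] at h
  rw [← h, ssg_count_touch G f u v hf]

lemma ssg_rest_eq {V : Type*} [Fintype V] [DecidableEq V]
    (G : SimpleGraph V) [DecidableRel G.Adj] {k : ℕ} (f f' : V → Fin k) (u v : V)
    (hoff : ∀ w, w ≠ u → w ≠ v → f' w = f w) :
    G.edgeFinset.filter (fun e => (∀ x ∈ e, ∀ y ∈ e, f x = f y) ∧ ¬(u ∈ e ∨ v ∈ e))
      = G.edgeFinset.filter (fun e => (∀ x ∈ e, ∀ y ∈ e, f' x = f' y) ∧ ¬(u ∈ e ∨ v ∈ e)) := by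
  apply Finset.filter_congr
  intro e _
  have key : ∀ (ht : ¬(u ∈ e ∨ v ∈ e)) (x : V), x ∈ e → f' x = f x := by
    intro ht x hx
    exact hoff x (fun h => ht (Or.inl (h ▸ hx))) (fun h => ht (Or.inr (h ▸ hx)))
  constructor
  · rintro ⟨hm, ht⟩
    refine ⟨fun x hx y hy => ?_, ht⟩
    rw [key ht x hx, key ht y hy]
    exact hm x hx y hy
  · rintro ⟨hm, ht⟩
    refine ⟨fun x hx y hy => ?_, ht⟩
    rw [← key ht x hx, ← key ht y hy]
    exact hm x hx y hy

lemma ssg_num (au av bu bv du dv : ℕ) (hbv : bv ≤ dv)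
    (h1 : (au : ℚ) / du < (av : ℚ) / dv) (h2 : (bv : ℚ) / dv < (bu : ℚ) / du)
    (hle : du ≤ dv) (hd : dv ≤ du + 1) :
    au + bv < av + bu := by
  have hdu : 0 < du := by
    rcases Nat.eq_zero_or_pos du with h | h
    · exfalso
      rw [h] at h2
      simp at h2
      have : (0:ℚ) ≤ (bv : ℚ) / dv := by positivity
      linarith
    · exact h
  have hdv : 0 < dv := by
    rcases Nat.eq_zero_or_pos dv with h | h
    · exfalso
      rw [h] at h1
      simp at h1
      have : (0:ℚ) ≤ (au : ℚ) / du := by positivity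
      linarith
    · exact h
  have hduQ : (0:ℚ) < du := by exact_mod_cast hdu
  have hdvQ : (0:ℚ) < dv := by exact_mod_cast hdv
  rw [div_lt_div_iff₀ hduQ hdvQ] at h1
  rw [div_lt_div_iff₀ hdvQ hduQ] at h2
  have hleQ : (du : ℚ) ≤ dv := by exact_mod_cast hle
  have hdQ : (dv : ℚ) ≤ du + 1 := by exact_mod_cast hd
  have hbvQ : (bv : ℚ) ≤ dv := by exact_mod_cast hbv
  have hA : au < av := by
    have : (au : ℚ) < av := by nlinarith [Nat.cast_nonneg (α := ℚ) au, Nat.cast_nonneg (α := ℚ) av]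
    exact_mod_cast this
  have hB : bv ≤ bu := by
    have : (bv : ℚ) < bu + 1 := by nlinarith [Nat.cast_nonneg (α := ℚ) bu, Nat.cast_nonneg (α := ℚ) bv]
    have : bv < bu + 1 := by exact_mod_cast this
    omega
  omega

lemma ssg_main {V : Type*} [Fintype V] [DecidableEq V]
    (G : SimpleGraph V) [DecidableRel G.Adj] {k : ℕ} (f f' : V → Fin k) (u v : V) (a b : Fin k)
    (hab : a ≠ b)
    (hfu : f u = a) (hfv : f v = b) (hf'u : f' u = b) (hf'v : f' v = a)
    (hoff : ∀ w, w ≠ u → w ≠ v → f' w = f w)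
    (h1 : (((G.neighborFinset u).filter (fun z => f z = a)).card : ℚ) / G.degree u
          < (((G.neighborFinset v).filter (fun z => f' z = a)).card : ℚ) / G.degree v)
    (h2 : (((G.neighborFinset v).filter (fun z => f z = b)).card : ℚ) / G.degree v
          < (((G.neighborFinset u).filter (fun z => f' z = b)).card : ℚ) / G.degree u)
    (hdeg : G.degree u ≤ G.degree v) (hdiff : G.degree v - G.degree u ≤ 1) :
    (G.edgeFinset.filter (fun e => ∀ x ∈ e, ∀ y ∈ e, f x = f y)).card
      < (G.edgeFinset.filter (fun e => ∀ x ∈ e, ∀ y ∈ e, f' x = f' y)).card := by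
  have hne : f u ≠ f v := by rw [hfu, hfv]; exact hab
  have hne' : f' u ≠ f' v := by rw [hf'u, hf'v]; exact fun h => hab h.symm
  rw [ssg_phi_split G f u v hne, ssg_phi_split G f' u v hne',
    ← ssg_rest_eq G f f' u v hoff, hfu, hfv, hf'u, hf'v]
  have hbv : ((G.neighborFinset v).filter (fun z => f z = b)).card ≤ G.degree v :=
    le_trans (Finset.card_filter_le _ _) (le_of_eq (G.card_neighborFinset_eq_degree v))
  have := ssg_num ((G.neighborFinset u).filter (fun z => f z = a)).card
    (((G.neighborFinset v).filter (fun z => f' z = a)).card)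
    (((G.neighborFinset u).filter (fun z => f' z = b)).card)
    (((G.neighborFinset v).filter (fun z => f z = b)).card)
    (G.degree u) (G.degree v) hbv h1 h2 hdeg (by omega)
  omega

theorem stmt1 {V A : Type*} [Fintype V] [DecidableEq V]
    (G : SimpleGraph V) [DecidableRel G.Adj] {k : ℕ} (hk : 2 ≤ k)
    (c : A → Fin k) (σ : A ≃ V) (i j : A)
    (hswap : ssgProfitable G c σ i j)
    (hdeg : G.degree (σ i) ≤ G.degree (σ j))
    (hdiff : G.degree (σ j) - G.degree (σ i) ≤ 1) :
    ssgPhi G c σ < ssgPhi G c (ssgSwap σ i j) := by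
  obtain ⟨hcij, h1, h2⟩ := hswap
  have hij : i ≠ j := by rintro rfl; exact hcij rfl
  have huv : σ i ≠ σ j := fun h => hij (σ.injective h)
  have hsi : ssgSwap σ i j i = σ j := by simp [ssgSwap]
  have hsj : ssgSwap σ i j j = σ i := by simp [ssgSwap]
  have hsymv : (ssgSwap σ i j).symm (σ j) = i := by rw [Equiv.symm_apply_eq, hsi]
  have hsymu : (ssgSwap σ i j).symm (σ i) = j := by rw [Equiv.symm_apply_eq, hsj]
  simp only [ssgUtil] at h1 h2
  rw [hsi] at h1
  rw [hsj] at h2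
  unfold ssgPhi
  refine ssg_main G (fun w => c (σ.symm w)) (fun w => c ((ssgSwap σ i j).symm w))
    (σ i) (σ j) (c i) (c j) hcij ?_ ?_ ?_ ?_ ?_ h1 h2 hdeg hdiff
  · simp
  · simp
  · show c ((ssgSwap σ i j).symm (σ i)) = c j
    rw [hsymu]
  · show c ((ssgSwap σ i j).symm (σ j)) = c i
    rw [hsymv]
  · intro w hwu hwv
    show c ((ssgSwap σ i j).symm w) = c (σ.symm w)
    have h : (ssgSwap σ i j).symm w = σ.symm w := by
      simp [ssgSwap, Equiv.swap_apply_of_ne_of_ne hwu hwv]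
    rw [h]
end

section
/- For any k ≥ 2, every k-type Swap Schelling Game played on an almost regular graph (maximum degree minus minimum degree equals 1) has the finite improvement property; in particular, every sequence of profitable swaps has length at most m, the number of edges of the graph. -/
open SimpleGraph Finset
open scoped Classical

/-!
The number `ssgPhi` of monochromatic edges is a potential. Let agents `i`, `j` of different
colours at `u = σ i`, `v = σ j` swap profitably. Since no monochromatic edge joins `u` and `v`,
`ssgPhi` is the number of monochromatic edges avoiding both (unchanged by the swap) plus the
numerators `a`, `b` of the utilities of `i` and `j`. The gains `a / deg u < a' / deg v` and
`b / deg v < b' / deg u`, with `a' ≤ deg v`, `b' ≤ deg u` and `|deg u - deg v| ≤ 1`, force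
`a + b < a' + b'`: when the degrees are equal both numerators grow, and otherwise the agent moving
to the lower degree cannot lose a same-coloured neighbour while the other must gain one. Hence
every swap raises `ssgPhi`, which never exceeds the number of edges.
-/

lemma Nat.add_le_of_forall_lt_succ {f : ℕ → ℕ} {L : ℕ} (hf : ∀ q < L, f q < f (q + 1)) :
    f 0 + L ≤ f L := by
  induction L with
  | zero => rfl
  | succ L ih =>
    have := ih fun q hq => hf q (by omega)
    have := hf L (by omega)
    omega

lemma Finset.card_eq_card_filter_add_card_filter_add_card_filter_nor {α : Type*} (s : Finset α)
    (p q : α → Prop) [DecidablePred p] [DecidablePred q] (h : ∀ x ∈ s, ¬ (p x ∧ q x)) :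
    #s = #(s.filter p) + #(s.filter q) + #(s.filter fun x => ¬ p x ∧ ¬ q x) := by
  rw [← card_filter_add_card_filter_not (p := fun x => p x ∨ q x), filter_or,
    card_union_of_disjoint (disjoint_filter.2 fun x hx hp hq => h x hx ⟨hp, hq⟩)]
  simp only [not_or]

lemma Nat.le_of_mul_lt_mul_succ {a a' d : ℕ} (h : a * d < a' * (d + 1)) (ha' : a' ≤ d) :
    a ≤ a' := by
  have : a * d < (a' + 1) * d := by nlinarith
  exact Nat.lt_succ_iff.1 (Nat.lt_of_mul_lt_mul_right this)

lemma Nat.add_lt_add_of_mul_lt_mul_of_mul_lt_mul {a b a' b' du dv : ℕ}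
    (hdu : du ≤ dv + 1) (hdv : dv ≤ du + 1) (ha' : a' ≤ dv) (hb' : b' ≤ du)
    (h1 : a * dv < a' * du) (h2 : b * du < b' * dv) : a + b < a' + b' := by
  rcases (by omega : du = dv ∨ du = dv + 1 ∨ dv = du + 1) with rfl | rfl | rfl
  · have := Nat.lt_of_mul_lt_mul_right h1
    have := Nat.lt_of_mul_lt_mul_right h2
    omega
  · have := Nat.le_of_mul_lt_mul_succ h1 ha'
    have : b < b' := Nat.lt_of_mul_lt_mul_right (by nlinarith : b * dv < b' * dv)
    omega
  · have := Nat.le_of_mul_lt_mul_succ h2 hb'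
    have : a < a' := Nat.lt_of_mul_lt_mul_right (by nlinarith : a * du < a' * du)
    omega

lemma SimpleGraph.degree_le_degree_add_one {V : Type*} [Fintype V] (G : SimpleGraph V)
    [DecidableRel G.Adj] (h : G.maxDegree ≤ G.minDegree + 1) (x y : V) :
    G.degree x ≤ G.degree y + 1 :=
  (G.degree_le_maxDegree x).trans (h.trans (Nat.succ_le_succ (G.minDegree_le_degree y)))

section Swap

variable {V A : Type*} [DecidableEq V]

lemma ssgSwap_apply_left (σ : A ≃ V) (i j : A) : ssgSwap σ i j i = σ j := by
  simp [ssgSwap]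

lemma ssgSwap_apply_right (σ : A ≃ V) (i j : A) : ssgSwap σ i j j = σ i := by
  simp [ssgSwap]

lemma ssgSwap_symm_apply (σ : A ≃ V) (i j : A) (x : V) :
    (ssgSwap σ i j).symm x = σ.symm (Equiv.swap (σ i) (σ j) x) := by
  simp [ssgSwap, Equiv.symm_swap]

end Swap

section SwapSchelling

variable {V A : Type*} [Fintype V] (G : SimpleGraph V) [DecidableRel G.Adj]
  {k : ℕ} (c : A → Fin k)

def ssgSameColorNbrs (τ : A ≃ V) (i : A) : Finset V :=
  (G.neighborFinset (τ i)).filter fun v => c (τ.symm v) = c i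

lemma card_ssgSameColorNbrs_le_degree (τ : A ≃ V) (i : A) :
    #(ssgSameColorNbrs G c τ i) ≤ G.degree (τ i) :=
  (card_filter_le _ _).trans (card_neighborFinset_eq_degree G _).le

variable [DecidableEq V]

def ssgMonoEdges (τ : A ≃ V) : Finset (Sym2 V) :=
  G.edgeFinset.filter fun e => ∀ u ∈ e, ∀ v ∈ e, c (τ.symm u) = c (τ.symm v)

variable {G c}

/-- Utilities use `x / 0 = 0`, so an agent can never strictly gain by moving onto an isolated
vertex. -/
lemma degree_pos_of_ssgUtil_lt {σ τ : A ≃ V} {i : A} (h : ssgUtil G c σ i < ssgUtil G c τ i) :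
    0 < G.degree (τ i) := by
  by_contra h0
  have hτ : ssgUtil G c τ i = 0 := by simp [ssgUtil, Nat.eq_zero_of_not_pos h0]
  exact h.not_ge (hτ ▸ div_nonneg (Nat.cast_nonneg _) (Nat.cast_nonneg _))

lemma ssgUtil_lt_ssgUtil_iff {σ τ : A ≃ V} {i : A} (hσ : 0 < G.degree (σ i))
    (hτ : 0 < G.degree (τ i)) :
    ssgUtil G c σ i < ssgUtil G c τ i ↔
      #(ssgSameColorNbrs G c σ i) * G.degree (τ i) <
        #(ssgSameColorNbrs G c τ i) * G.degree (σ i) := by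
  rw [ssgUtil, ssgUtil, div_lt_div_iff₀ (by exact_mod_cast hσ) (by exact_mod_cast hτ)]
  exact_mod_cast Iff.rfl

lemma card_ssgMonoEdges_filter_mem (τ : A ≃ V) (i : A) :
    #((ssgMonoEdges G c τ).filter (τ i ∈ ·)) = #(ssgSameColorNbrs G c τ i) := by
  symm
  refine card_bij (fun x _ => s(τ i, x)) (fun x hx => ?_) (fun x _ y _ h => Sym2.congr_right.1 h)
    fun e he => ?_
  · obtain ⟨hadj, hx⟩ := mem_filter.1 hx
    have hcol : ∀ y ∈ s(τ i, x), c (τ.symm y) = c i := by simp [hx]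
    exact mem_filter.2 ⟨mem_filter.2 ⟨G.mem_edgeFinset.2 ((G.mem_neighborFinset _ _).1 hadj),
      fun u hu v hv => (hcol u hu).trans (hcol v hv).symm⟩, Sym2.mem_mk_left _ _⟩
  · simp only [ssgMonoEdges, mem_filter] at he
    obtain ⟨⟨he, hmono⟩, hi⟩ := he
    obtain ⟨x, rfl⟩ := Sym2.mem_iff_exists.1 hi
    refine ⟨x, mem_filter.2 ⟨(G.mem_neighborFinset _ _).2 (G.mem_edgeFinset.1 he), ?_⟩, rfl⟩
    simpa using hmono x (Sym2.mem_mk_right _ _) (τ i) (Sym2.mem_mk_left _ _)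

lemma ssgPhi_eq_of_ne (τ : A ≃ V) {i j : A} (hij : c i ≠ c j) :
    ssgPhi G c τ = #(ssgSameColorNbrs G c τ i) + #(ssgSameColorNbrs G c τ j) +
      #((ssgMonoEdges G c τ).filter fun e => τ i ∉ e ∧ τ j ∉ e) := by
  rw [ssgPhi, ← ssgMonoEdges, ← card_ssgMonoEdges_filter_mem, ← card_ssgMonoEdges_filter_mem]
  refine card_eq_card_filter_add_card_filter_add_card_filter_nor _ _ _ fun e he hmem => hij ?_
  simpa using (mem_filter.1 he).2 _ hmem.1 _ hmem.2

lemma ssgMonoEdges_ssgSwap_filter_not_mem (σ : A ≃ V) (i j : A) :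
    (ssgMonoEdges G c (ssgSwap σ i j)).filter (fun e => σ i ∉ e ∧ σ j ∉ e) =
      (ssgMonoEdges G c σ).filter (fun e => σ i ∉ e ∧ σ j ∉ e) := by
  simp only [ssgMonoEdges, filter_filter]
  refine filter_congr fun e _ => and_congr_left fun ⟨hi, hj⟩ => ?_
  have hfix : ∀ x ∈ e, (ssgSwap σ i j).symm x = σ.symm x := fun x hx => by
    rw [ssgSwap_symm_apply, Equiv.swap_apply_of_ne_of_ne (ne_of_mem_of_not_mem hx hi)
      (ne_of_mem_of_not_mem hx hj)]
  exact forall₂_congr fun u hu => forall₂_congr fun v hv => by rw [hfix u hu, hfix v hv]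

theorem ssgPhi_lt_ssgPhi_ssgSwap (hdeg : ∀ x y, G.degree x ≤ G.degree y + 1) {σ : A ≃ V}
    {i j : A} (h : ssgProfitable G c σ i j) : ssgPhi G c σ < ssgPhi G c (ssgSwap σ i j) := by
  obtain ⟨hcij, hi, hj⟩ := h
  have hv := degree_pos_of_ssgUtil_lt hi
  have hu := degree_pos_of_ssgUtil_lt hj
  rw [ssgSwap_apply_left] at hv
  rw [ssgSwap_apply_right] at hu
  rw [ssgUtil_lt_ssgUtil_iff hu (by rwa [ssgSwap_apply_left]), ssgSwap_apply_left] at hi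
  rw [ssgUtil_lt_ssgUtil_iff hv (by rwa [ssgSwap_apply_right]), ssgSwap_apply_right] at hj
  have hsum := Nat.add_lt_add_of_mul_lt_mul_of_mul_lt_mul (hdeg _ _) (hdeg _ _)
    (ssgSwap_apply_left σ i j ▸ card_ssgSameColorNbrs_le_degree G c _ i)
    (ssgSwap_apply_right σ i j ▸ card_ssgSameColorNbrs_le_degree G c _ j) hi hj
  rw [ssgPhi_eq_of_ne σ hcij, ssgPhi_eq_of_ne (ssgSwap σ i j) hcij.symm, ssgSwap_apply_left,
    ssgSwap_apply_right, ssgMonoEdges_ssgSwap_filter_not_mem]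
  omega

lemma ssgPhi_le_card_edgeFinset (τ : A ≃ V) : ssgPhi G c τ ≤ #G.edgeFinset :=
  card_filter_le _ _

end SwapSchelling

theorem stmt3_general {V A : Type*} [Fintype V] [DecidableEq V]
    (G : SimpleGraph V) [DecidableRel G.Adj]
    (halmost : G.maxDegree - G.minDegree = 1)
    {k : ℕ} (c : A → Fin k)
    (L : ℕ) (σseq : ℕ → (A ≃ V))
    (hstep : ∀ q < L, ∃ i j : A,
      ssgProfitable G c (σseq q) i j ∧ σseq (q + 1) = ssgSwap (σseq q) i j) :
    L ≤ G.edgeFinset.card := by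
  have hdeg := G.degree_le_degree_add_one (by omega)
  have hincr : ∀ q < L, ssgPhi G c (σseq q) < ssgPhi G c (σseq (q + 1)) := fun q hq => by
    obtain ⟨i, j, hprof, hnext⟩ := hstep q hq
    exact hnext ▸ ssgPhi_lt_ssgPhi_ssgSwap hdeg hprof
  calc L ≤ ssgPhi G c (σseq 0) + L := Nat.le_add_left _ _
    _ ≤ ssgPhi G c (σseq L) := Nat.add_le_of_forall_lt_succ hincr
    _ ≤ #G.edgeFinset := ssgPhi_le_card_edgeFinset _

theorem stmt3 {V A : Type*} [Fintype V] [DecidableEq V]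
    (G : SimpleGraph V) [DecidableRel G.Adj] (hconn : G.Connected)
    (halmost : G.maxDegree - G.minDegree = 1)
    {k : ℕ} (hk : 2 ≤ k) (c : A → Fin k)
    (L : ℕ) (σseq : ℕ → (A ≃ V))
    (hstep : ∀ q < L, ∃ i j : A,
      ssgProfitable G c (σseq q) i j ∧ σseq (q + 1) = ssgSwap (σseq q) i j) :
    L ≤ G.edgeFinset.card :=
  stmt3_general G halmost c L σseq hstep
end

section
/- The Price of Anarchy of 2-type Swap Schelling Games with o > 1 agents of the minority color and n total agents is at most (n·o·(n−o) − n)/(o·(o−1)·(n−o)). In particular, every swap equilibrium has social welfare at least o − 1, and the optimal social welfare is at most n − 1/o − 1/(n−o). -/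
/-!
When agents `i` and `j` of different colours swap, every neighbour of `j`'s vertex other than
`i`'s vertex that is not a friend of `j` becomes a friend of `i`. In a swap equilibrium one of them
does not gain, so their utilities satisfy `u i + u j ≥ 1`, or `u i + u j ≥ 1 - 1 / d` if they are
adjacent and both have degree at least `d`. A Hall-deficiency argument matches the minority colour injectively into the majority colour
so that all adjacent matched pairs lie in one complete bipartite block `S × T`; there are at most
`min #S #T` such pairs, each losing at most `1 / min #S #T`, so the welfare is at least `o - 1`.
For the optimum, connectivity yields an edge between two colours; its endpoints have utilities at
most `1 - 1 / o` and `1 - 1 / (n - o)`, all others at most `1`.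
-/

open SimpleGraph Finset
open scoped Classical

section Matching

variable {ι κ : Type*} [Fintype κ] (R : ι → κ → Prop)

noncomputable def unrelatedTo (s : Finset ι) : Finset κ :=
  s.biUnion fun i => {j | ¬ R i j}

variable {R}

lemma mem_unrelatedTo {s : Finset ι} {j : κ} : j ∈ unrelatedTo R s ↔ ∃ i ∈ s, ¬ R i j := by
  simp [unrelatedTo]

lemma unrelatedTo_mono {s t : Finset ι} (h : s ⊆ t) : unrelatedTo R s ⊆ unrelatedTo R t :=
  biUnion_subset_biUnion_of_subset_left _ h

variable [Fintype ι]

lemma card_le_card_biUnion_of_deficiency_le {S : Finset ι}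
    (hS : ∀ s : Finset ι, (#s : ℤ) - #(unrelatedTo R s) ≤ #S - #(unrelatedTo R S))
    (hcard : Fintype.card ι ≤ Fintype.card κ) (s : Finset ι) :
    #s ≤ #(s.biUnion fun i => unrelatedTo R {i} ∪ if i ∈ S then (unrelatedTo R S)ᶜ else ∅) := by
  set t := fun i => unrelatedTo R {i} ∪ if i ∈ S then (unrelatedTo R S)ᶜ else ∅
  have hN : ∀ s' ⊆ s, unrelatedTo R s' ⊆ s.biUnion t := fun s' hs' j hj => by
    obtain ⟨i, hi, hij⟩ := mem_unrelatedTo.1 hj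
    exact mem_biUnion.2
      ⟨i, hs' hi, mem_union_left _ (mem_unrelatedTo.2 ⟨i, mem_singleton_self i, hij⟩)⟩
  by_cases hsS : Disjoint s S
  · have h1 := hS (s ∪ S)
    rw [unrelatedTo, union_biUnion, ← unrelatedTo, ← unrelatedTo, card_union_of_disjoint hsS] at h1
    have h2 := card_union_le (unrelatedTo R s) (unrelatedTo R S)
    have h3 := card_le_card (hN s subset_rfl)
    omega
  · obtain ⟨i, his, hiS⟩ := not_disjoint_iff.1 hsS
    have hT : (unrelatedTo R S)ᶜ ⊆ s.biUnion t := fun j hj =>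
      mem_biUnion.2 ⟨i, his, mem_union_right _ (by simpa [hiS] using hj)⟩
    have hdisj : Disjoint (unrelatedTo R (s ∩ S)) (unrelatedTo R S)ᶜ :=
      disjoint_compl_right.mono_left (unrelatedTo_mono inter_subset_right)
    have h1 := card_le_card (union_subset (hN (s ∩ S) inter_subset_left) hT)
    rw [card_union_of_disjoint hdisj, card_compl] at h1
    have h2 := hS (s ∩ S)
    have h3 := card_inter_add_card_sdiff s S
    have h4 : #(s \ S) + #S ≤ Fintype.card ι := by
      rw [← card_union_of_disjoint sdiff_disjoint]; exact card_le_univ _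
    have h5 := card_le_univ (unrelatedTo R S)
    omega

/-- `S` is a set of maximal Hall deficiency for the relation "not `R`", and `T` is the set of
elements related to all of `S`. Offering `T` as extra partners to the members of `S` restores
Hall's condition, and only those extra partners can be `R`-related. -/
theorem exists_injective_forall_rel_mem_rectangle (hcard : Fintype.card ι ≤ Fintype.card κ) :
    ∃ f : ι → κ, Function.Injective f ∧ ∃ (S : Finset ι) (T : Finset κ),
      (∀ i ∈ S, ∀ j ∈ T, R i j) ∧ ∀ i, R i (f i) → i ∈ S ∧ f i ∈ T := by
  obtain ⟨S, -, hS⟩ := exists_max_image (univ : Finset (Finset ι))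
    (fun s => (#s : ℤ) - #(unrelatedTo R s)) univ_nonempty
  obtain ⟨f, hf, hft⟩ := (all_card_le_biUnion_card_iff_exists_injective _).1
    (card_le_card_biUnion_of_deficiency_le (fun s => hS s (mem_univ s)) hcard)
  refine ⟨f, hf, S, (unrelatedTo R S)ᶜ, fun i hi j hj => ?_, fun i hi => ?_⟩
  · by_contra h
    exact mem_compl.1 hj (mem_unrelatedTo.2 ⟨i, hi, h⟩)
  · have hfi := hft i
    have hfi' : f i ∉ unrelatedTo R {i} := by simpa [mem_unrelatedTo] using hi
    split_ifs at hfi with hiS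
    · exact ⟨hiS, (mem_union.1 hfi).resolve_left hfi'⟩
    · exact absurd ((mem_union.1 hfi).resolve_right (notMem_empty _)) hfi'

end Matching

lemma Fin.two_eq_or_eq_of_ne {x y : Fin 2} (h : x ≠ y) (z : Fin 2) : z = x ∨ z = y := by
  omega

section Utility

variable {V A : Type*} [Fintype V] [DecidableEq V] (G : SimpleGraph V) [DecidableRel G.Adj]

lemma ssgUtil_nonneg {k : ℕ} (c : A → Fin k) (σ : A ≃ V) (i : A) : 0 ≤ ssgUtil G c σ i := by
  unfold ssgUtil; positivity

lemma ssgUtil_le_one {k : ℕ} (c : A → Fin k) (σ : A ≃ V) (i : A) : ssgUtil G c σ i ≤ 1 :=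
  div_le_one_of_le₀ (mod_cast (card_filter_le _ _).trans (G.card_neighborFinset_eq_degree _).le)
    (Nat.cast_nonneg _)

lemma ssgUtil_le_one_sub_inv_card [Fintype A] {k : ℕ} (c : A → Fin k) (σ : A ≃ V) {i j : A}
    (hadj : G.Adj (σ i) (σ j)) (hc : c j ≠ c i) :
    ssgUtil G c σ i ≤ 1 - 1 / #{a | c a = c i} := by
  set F := (G.neighborFinset (σ i)).filter fun v => c (σ.symm v) = c i
  have hFK : #F + 1 ≤ #{a | c a = c i} := by
    have hi : i ∉ F.image σ.symm := by
      simp only [F, mem_image, mem_filter, mem_neighborFinset, not_exists, not_and]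
      rintro v ⟨hv, -⟩ rfl
      simp at hv
    rw [← card_image_of_injective F σ.symm.injective, ← card_insert_of_notMem hi]
    refine card_le_card (insert_subset (by simp) fun a ha => ?_)
    obtain ⟨v, hv, rfl⟩ := mem_image.1 ha
    simpa using (mem_filter.1 hv).2
  have hFd : #F + 1 ≤ G.degree (σ i) := by
    have hj : σ j ∉ F := by simp [F, hc]
    rw [← card_insert_of_notMem hj, ← G.card_neighborFinset_eq_degree]
    exact card_le_card (insert_subset ((G.mem_neighborFinset _ _).2 hadj) (filter_subset _ _))
  have hFd' : (#F : ℚ) + 1 ≤ G.degree (σ i) := by exact_mod_cast hFd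
  have hFK' : (#F : ℚ) + 1 ≤ #{a | c a = c i} := by exact_mod_cast hFK
  calc ssgUtil G c σ i = #F / G.degree (σ i) := rfl
    _ ≤ #F / (#F + 1) := div_le_div_of_nonneg_left (by positivity) (by positivity) hFd'
    _ = 1 - 1 / (#F + 1) := by field_simp; ring
    _ ≤ 1 - 1 / #{a | c a = c i} := by gcongr

lemma one_sub_le_ssgUtil_swap_add_ssgUtil {c : A → Fin 2} (σ : A ≃ V) {i j : A}
    (hd : 0 < G.degree (σ j)) (hc : c i ≠ c j) :
    1 - (if G.Adj (σ i) (σ j) then (G.degree (σ j) : ℚ)⁻¹ else 0) ≤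
      ssgUtil G c (ssgSwap σ i j) i + ssgUtil G c σ j := by
  set N := G.neighborFinset (σ j)
  set F' := N.filter fun v => c ((ssgSwap σ i j).symm v) = c i
  set F := N.filter fun v => c (σ.symm v) = c j
  have hcover : N.erase (σ i) ⊆ F' ∪ F := by
    intro v hv
    obtain ⟨hvi, hvN⟩ := mem_erase.1 hv
    have hvj : v ≠ σ j := (G.ne_of_adj ((G.mem_neighborFinset _ _).1 hvN)).symm
    have hsymm : (ssgSwap σ i j).symm v = σ.symm v := by
      simp [ssgSwap, Equiv.swap_apply_of_ne_of_ne hvi hvj]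
    rcases Fin.two_eq_or_eq_of_ne hc (c (σ.symm v)) with h | h
    · exact mem_union_left _ (mem_filter.2 ⟨hvN, hsymm ▸ h⟩)
    · exact mem_union_right _ (mem_filter.2 ⟨hvN, h⟩)
  have hcard : (#(N.erase (σ i)) : ℚ) ≤ #F' + #F := by
    exact_mod_cast (card_le_card hcover).trans (card_union_le _ _)
  have hdQ : (0 : ℚ) < G.degree (σ j) := by exact_mod_cast hd
  have hutil : ssgUtil G c (ssgSwap σ i j) i + ssgUtil G c σ j = (#F' + #F) / G.degree (σ j) := by
    have hswap : ssgSwap σ i j i = σ j := by simp [ssgSwap]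
    rw [add_div, ssgUtil, hswap]
    rfl
  rw [hutil, le_div_iff₀ hdQ]
  by_cases hadj : G.Adj (σ i) (σ j)
  · have hmem : σ i ∈ N := (G.mem_neighborFinset _ _).2 hadj.symm
    rw [card_erase_of_mem hmem, G.card_neighborFinset_eq_degree, Nat.cast_sub hd,
      Nat.cast_one] at hcard
    rw [if_pos hadj, sub_mul, one_mul, inv_mul_cancel₀ hdQ.ne']
    exact hcard
  · have hmem : σ i ∉ N := fun h => hadj ((G.mem_neighborFinset _ _).1 h).symm
    rw [erase_eq_of_notMem hmem, G.card_neighborFinset_eq_degree] at hcard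
    rw [if_neg hadj, sub_zero, one_mul]
    exact hcard

lemma one_sub_le_ssgUtil_add_of_equilibrium {c : A → Fin 2} {σ : A ≃ V}
    (heq : ssgEquilibrium G c σ) {i j : A} (hc : c i ≠ c j)
    (hdi : 0 < G.degree (σ i)) (hdj : 0 < G.degree (σ j)) :
    1 - (if G.Adj (σ i) (σ j) then max (G.degree (σ i) : ℚ)⁻¹ (G.degree (σ j) : ℚ)⁻¹ else 0) ≤
      ssgUtil G c σ i + ssgUtil G c σ j := by
  have hi := one_sub_le_ssgUtil_swap_add_ssgUtil G σ hdj hc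
  have hj := one_sub_le_ssgUtil_swap_add_ssgUtil G σ hdi hc.symm
  rw [ssgSwap, Equiv.swap_comm, ← ssgSwap] at hj
  simp only [G.adj_comm (σ j)] at hj
  have hnot : ¬ (ssgUtil G c σ i < ssgUtil G c (ssgSwap σ i j) i ∧
      ssgUtil G c σ j < ssgUtil G c (ssgSwap σ i j) j) := fun h => heq i j ⟨hc, h⟩
  have := le_max_left (G.degree (σ i) : ℚ)⁻¹ (G.degree (σ j) : ℚ)⁻¹
  have := le_max_right (G.degree (σ i) : ℚ)⁻¹ (G.degree (σ j) : ℚ)⁻¹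
  by_cases hlt : ssgUtil G c σ i < ssgUtil G c (ssgSwap σ i j) i
  · have := not_lt.1 fun h => hnot ⟨hlt, h⟩
    split_ifs at hj ⊢ <;> linarith
  · split_ifs at hi ⊢ <;> linarith

end Utility

lemma SimpleGraph.card_le_degree_of_forall_adj {V ι : Type*} [Fintype V] {G : SimpleGraph V}
    [DecidableRel G.Adj] {g : ι → V} (hg : Function.Injective g) {v : V} {s : Finset ι}
    (h : ∀ j ∈ s, G.Adj v (g j)) : #s ≤ G.degree v := by
  rw [← card_neighborFinset_eq_degree]
  exact card_le_card_of_injOn g (fun j hj => (G.mem_neighborFinset _ _).2 (h j hj)) hg.injOn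

lemma SimpleGraph.Preconnected.exists_adj_of_not {V : Type*} {G : SimpleGraph V}
    (hG : G.Preconnected) {p : V → Prop} {u v : V} (hu : p u) (hv : ¬ p v) :
    ∃ a b, G.Adj a b ∧ p a ∧ ¬ p b := by
  obtain ⟨w⟩ := hG u v
  obtain ⟨d, -, hd⟩ := w.exists_boundary_dart {x | p x} hu hv
  exact ⟨d.fst, d.snd, d.adj, hd⟩

section Welfare

variable {V A : Type*} [Fintype V] [DecidableEq V] [Fintype A]
  (G : SimpleGraph V) [DecidableRel G.Adj]

lemma sum_ssgUtil_add_le_ssgWelfare {k : ℕ} (c : A → Fin k) (σ : A ≃ V) (p : A → Prop)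
    [DecidablePred p] {f : {a // p a} → {a // ¬ p a}} (hf : Function.Injective f) :
    ∑ i : {a // p a}, (ssgUtil G c σ i + ssgUtil G c σ (f i)) ≤ ssgWelfare G c σ := by
  rw [sum_add_distrib, ssgWelfare, ← Fintype.sum_subtype_add_sum_subtype p]
  refine add_le_add le_rfl ?_
  calc ∑ i : {a // p a}, ssgUtil G c σ (f i)
        = ∑ j ∈ univ.map ⟨f, hf⟩, ssgUtil G c σ j :=
          (sum_map univ ⟨f, hf⟩ fun j => ssgUtil G c σ j).symm
    _ ≤ ∑ j : {a // ¬ p a}, ssgUtil G c σ j :=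
      sum_le_sum_of_subset_of_nonneg (subset_univ _) fun j _ _ => ssgUtil_nonneg G c σ j

theorem ssgWelfare_ge_of_equilibrium {c : A → Fin 2} {σ : A ≃ V}
    (hdeg : ∀ v, 0 < G.degree v) (heq : ssgEquilibrium G c σ) (x : Fin 2)
    (hx : #{a | c a = x} ≤ #{a | c a ≠ x}) :
    (#{a | c a = x} : ℚ) - 1 ≤ ssgWelfare G c σ := by
  obtain ⟨f, hf, S, T, hST, hfST⟩ := exists_injective_forall_rel_mem_rectangle
    (R := fun (i : {a // c a = x}) (j : {a // c a ≠ x}) => G.Adj (σ i) (σ j))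
    (by simpa only [Fintype.card_subtype] using hx)
  have hσ : Function.Injective fun a : {a // c a = x} => σ a :=
    σ.injective.comp Subtype.val_injective
  have hσ' : Function.Injective fun a : {a // c a ≠ x} => σ a :=
    σ.injective.comp Subtype.val_injective
  set m := min #S #T
  set P : Finset {a // c a = x} := {i | G.Adj (σ i) (σ (f i))}
  have hP : #P ≤ m := le_min
    (card_le_card fun i hi => (hfST i (mem_filter.1 hi).2).1)
    (card_le_card_of_injOn f (fun i hi => (hfST i (mem_filter.1 hi).2).2) hf.injOn)
  have hpair : ∀ i : {a // c a = x}, 1 - (if G.Adj (σ i) (σ (f i)) then (m : ℚ)⁻¹ else 0) ≤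
      ssgUtil G c σ i + ssgUtil G c σ (f i) := by
    intro i
    refine le_trans ?_ (one_sub_le_ssgUtil_add_of_equilibrium G heq
      (i.2.trans_ne (f i).2.symm) (hdeg _) (hdeg _))
    split_ifs with hadj
    · obtain ⟨hiS, hfT⟩ := hfST i hadj
      have hm : (0 : ℚ) < m := mod_cast lt_min (card_pos.2 ⟨_, hiS⟩) (card_pos.2 ⟨_, hfT⟩)
      have hdi : (m : ℚ) ≤ G.degree (σ i) := mod_cast (min_le_right _ _).trans
        (G.card_le_degree_of_forall_adj hσ' (hST i hiS))
      have hdj : (m : ℚ) ≤ G.degree (σ (f i)) := mod_cast (min_le_left _ _).trans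
        (G.card_le_degree_of_forall_adj hσ fun k hk => (hST k hk _ hfT).symm)
      gcongr
      exact max_le (inv_anti₀ hm hdi) (inv_anti₀ hm hdj)
    · rfl
  have hpenalty : (#P : ℚ) * (m : ℚ)⁻¹ ≤ 1 :=
    (div_eq_mul_inv (#P : ℚ) m) ▸ div_le_one_of_le₀ (mod_cast hP) (Nat.cast_nonneg _)
  calc (#{a | c a = x} : ℚ) - 1 ≤ #{a | c a = x} - #P * (m : ℚ)⁻¹ := by linarith
    _ = ∑ i : {a // c a = x}, (1 - if G.Adj (σ i) (σ (f i)) then (m : ℚ)⁻¹ else 0) := by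
      rw [sum_sub_distrib, ← sum_filter, sum_const, sum_const, card_univ, Fintype.card_subtype,
        nsmul_eq_mul, nsmul_eq_mul, mul_one]
    _ ≤ ∑ i : {a // c a = x}, (ssgUtil G c σ i + ssgUtil G c σ (f i)) :=
      sum_le_sum fun i _ => hpair i
    _ ≤ ssgWelfare G c σ := sum_ssgUtil_add_le_ssgWelfare G c σ (fun a => c a = x) hf

theorem ssgWelfare_le (hG : G.Preconnected) {c : A → Fin 2} (σ : A ≃ V) (x : Fin 2) {a b : A}
    (ha : c a = x) (hb : c b ≠ x) :
    ssgWelfare G c σ ≤ Fintype.card A - 1 / #{a | c a = x} - 1 / #{a | c a ≠ x} := by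
  obtain ⟨v, w, hvw, hv, hw⟩ := hG.exists_adj_of_not (p := fun v => c (σ.symm v) = x)
    (u := σ a) (v := σ b) (by simpa using ha) (by simpa using hb)
  set i := σ.symm v
  set j := σ.symm w
  have hadj : G.Adj (σ i) (σ j) := by simpa [i, j] using hvw
  have hij : i ≠ j := fun h => hw (h ▸ hv)
  have hi : ssgUtil G c σ i ≤ 1 - 1 / #{a | c a = x} := by
    simpa only [hv] using ssgUtil_le_one_sub_inv_card G c σ hadj (by rwa [hv])
  have hj : ssgUtil G c σ j ≤ 1 - 1 / #{a | c a ≠ x} := by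
    have hclass : (univ.filter fun a => c a = c j) = univ.filter fun a => c a ≠ x :=
      filter_congr fun a _ => ⟨fun h => h ▸ hw,
        fun h => (Fin.two_eq_or_eq_of_ne (fun h' => hw h'.symm) (c a)).resolve_left h⟩
    simpa only [hclass] using
      ssgUtil_le_one_sub_inv_card G c σ hadj.symm (by rw [hv]; exact Ne.symm hw)
  have hdeficit : (1 - ssgUtil G c σ i) + (1 - ssgUtil G c σ j) ≤
      ∑ a, (1 - ssgUtil G c σ a) := by
    rw [← sum_pair hij (f := fun a => 1 - ssgUtil G c σ a)]
    exact sum_le_sum_of_subset_of_nonneg (subset_univ _)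
      fun a _ _ => sub_nonneg.2 (ssgUtil_le_one G c σ a)
  rw [sum_sub_distrib, sum_const, card_univ, nsmul_one] at hdeficit
  rw [ssgWelfare]
  linarith

end Welfare

lemma le_div_mul_of_le_of_le {n o w w' : ℚ} (ho : 2 ≤ o) (hno : 2 ≤ n - o) (hw : o - 1 ≤ w)
    (hw' : w' ≤ n - 1 / o - 1 / (n - o)) :
    w' ≤ (n * o * (n - o) - n) / (o * (o - 1) * (n - o)) * w := by
  have hon : 1 ≤ o * (n - o) := by nlinarith
  calc w' ≤ n - 1 / o - 1 / (n - o) := hw'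
    _ = (n * o * (n - o) - n) / (o * (o - 1) * (n - o)) * (o - 1) := by
      field_simp [show o - 1 ≠ 0 by linarith, show n - o ≠ 0 by linarith]
      ring
    _ ≤ (n * o * (n - o) - n) / (o * (o - 1) * (n - o)) * w := by
      refine mul_le_mul_of_nonneg_left hw (div_nonneg ?_ ?_)
      · nlinarith
      · have : 0 ≤ o * (o - 1) := by nlinarith
        nlinarith

theorem stmt6 {V A : Type*} [Fintype V] [DecidableEq V] [Fintype A]
    (G : SimpleGraph V) [DecidableRel G.Adj] (hconn : G.Connected)
    (c : A → Fin 2) (o n : ℕ)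
    (ho : o = (Finset.univ.filter (fun i : A => c i = 0)).card)
    (hn : n = Fintype.card A)
    (ho1 : 1 < o) (hmin : o ≤ n - o) :
    (∀ σ : A ≃ V, ssgEquilibrium G c σ → (o : ℚ) - 1 ≤ ssgWelfare G c σ) ∧
    (∀ σ : A ≃ V,
      ssgWelfare G c σ ≤ (n : ℚ) - 1 / (o : ℚ) - 1 / ((n : ℚ) - (o : ℚ))) ∧
    (∀ σ σ' : A ≃ V, ssgEquilibrium G c σ →
      ssgWelfare G c σ' ≤
        (((n : ℚ) * (o : ℚ) * ((n : ℚ) - (o : ℚ)) - (n : ℚ)) /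
          ((o : ℚ) * ((o : ℚ) - 1) * ((n : ℚ) - (o : ℚ)))) * ssgWelfare G c σ) := by
  have hblue : #{a | c a ≠ 0} = n - o := by
    have := card_filter_add_card_filter_not (s := univ) (fun a : A => c a = 0)
    rw [card_univ, ← hn, ← ho] at this
    simp only [← ne_eq] at this
    omega
  have hblueQ : (#{a | c a ≠ 0} : ℚ) = n - o := by
    rw [hblue, Nat.cast_sub (by omega)]
  have hlow : ∀ σ : A ≃ V, ssgEquilibrium G c σ → (o : ℚ) - 1 ≤ ssgWelfare G c σ := by
    intro σ hσ
    have : Nontrivial V := Fintype.one_lt_card_iff_nontrivial.1 (by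
      rw [← Fintype.card_congr σ]; omega)
    exact ho ▸ ssgWelfare_ge_of_equilibrium G (hconn.preconnected.degree_pos_of_nontrivial ·) hσ 0
      (by omega)
  have hup : ∀ σ : A ≃ V, ssgWelfare G c σ ≤ (n : ℚ) - 1 / (o : ℚ) - 1 / ((n : ℚ) - (o : ℚ)) := by
    intro σ
    obtain ⟨a, ha⟩ := card_pos.1 (show 0 < #{a | c a = 0} by omega)
    obtain ⟨b, hb⟩ := card_pos.1 (show 0 < #{a | c a ≠ 0} by omega)
    have := ssgWelfare_le G hconn.preconnected σ 0 (mem_filter.1 ha).2 (mem_filter.1 hb).2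
    rwa [← hn, ← ho, hblueQ] at this
  refine ⟨hlow, hup, fun σ σ' hσ => le_div_mul_of_le_of_le (by exact_mod_cast ho1) ?_
    (hlow σ hσ) (hup σ')⟩
  rw [← hblueQ, hblue]
  exact_mod_cast (by omega : 2 ≤ n - o)
end

section
/- In any local swap equilibrium of a local 2-type Swap Schelling Game on a connected graph with maximum degree Δ ≤ n − 2 (n vertices, Δ ≥ 2), the average utility of an agent is at least 1/(2(Δ² − Δ + 1)); hence the Local Price of Anarchy is at most 4(Δ² − Δ + 1). -/
/-!
Charge every vertex of utility `0` to a vertex of positive utility. A vertex `x` of utility `0`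
has only unlike neighbours. If `x` and a neighbour `y` both have degree at least `2`, the swap of
`x` and `y` is blocked, so either all neighbours of `y` other than `x` share the colour of `y`, or
`y` would gain at least `(deg x - 1) / deg x` on the vertex of `x`: either way `y` has utility at
least `1/2`. As `Δ ≤ n - 2`, the graph is not a star, so every vertex has a neighbour of degree at
least `2`. Hence a vertex of utility `0` is adjacent to a vertex of positive utility, or lies at
distance two, through a vertex of utility `0`, from a vertex of utility at least `1/2`.
A vertex with `s ≥ 1` like and `t` unlike neighbours thus receives at most `t` charges, or at most
`t Δ` if its utility `s / (s + t)` is at least `1/2` (so `t ≤ s`); in both cases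
`1 + #charges ≤ 2 (Δ² - Δ + 1) s / (s + t)`. Summing gives `n ≤ 2 (Δ² - Δ + 1) W`, while any
welfare is at most `n`.
-/

open SimpleGraph Finset
open scoped Classical

namespace SimpleGraph

variable {V : Type*} {G : SimpleGraph V}

theorem Preconnected.mem_of_forall_adj_mem (hG : G.Preconnected) {S : Set V}
    (hS : ∀ a ∈ S, ∀ b, G.Adj a b → b ∈ S) {u : V} (hu : u ∈ S) (v : V) : v ∈ S := by
  by_contra hv
  obtain ⟨d, -, hd₁, hd₂⟩ := (hG u v).some.exists_boundary_dart S hu hv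
  exact hd₂ (hS _ hd₁ _ d.adj)

theorem Connected.exists_adj_two_le_degree [Fintype V] [DecidableRel G.Adj] (hG : G.Connected)
    (hΔ : G.maxDegree + 2 ≤ Fintype.card V) (x : V) : ∃ y, G.Adj x y ∧ 2 ≤ G.degree y := by
  by_contra! hleaf
  have hstar (v : V) : v ∈ insert x (G.neighborFinset x) := by
    refine hG.preconnected.mem_of_forall_adj_mem (S := ↑(insert x (G.neighborFinset x)))
      ?_ (mem_insert_self x _) v
    intro a ha b hab
    obtain rfl | hxa := mem_insert.mp ha
    · simpa using Or.inr hab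
    · rw [mem_neighborFinset] at hxa
      have hle : #(G.neighborFinset a) ≤ 1 := by
        rw [card_neighborFinset_eq_degree]; have := hleaf a hxa; omega
      have := card_le_one.mp hle b (by simpa using hab) x (by simpa using hxa.symm)
      simp [this]
  have hcard : Fintype.card V ≤ G.degree x + 1 := by
    rw [← card_univ, ← card_neighborFinset_eq_degree]
    exact (card_le_card fun v _ => hstar v).trans (card_insert_le _ _)
  have := G.degree_le_maxDegree x
  omega

end SimpleGraph

section Coloring

variable {V κ : Type*} [Fintype V] (G : SimpleGraph V) [DecidableRel G.Adj] [DecidableEq κ]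

def likeNeighborFinset (χ : V → κ) (v : V) : Finset V := {w ∈ G.neighborFinset v | χ w = χ v}

def unlikeNeighborFinset (χ : V → κ) (v : V) : Finset V := {w ∈ G.neighborFinset v | χ w ≠ χ v}

noncomputable def colorUtil (χ : V → κ) (v : V) : ℚ :=
  #(likeNeighborFinset G χ v) / G.degree v

variable {G}

theorem card_likeNeighborFinset_add_card_unlikeNeighborFinset (χ : V → κ) (v : V) :
    #(likeNeighborFinset G χ v) + #(unlikeNeighborFinset G χ v) = G.degree v := by
  rw [← card_neighborFinset_eq_degree]
  exact card_filter_add_card_filter_not _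

theorem colorUtil_nonneg (χ : V → κ) (v : V) : 0 ≤ colorUtil G χ v := by
  unfold colorUtil; positivity

theorem colorUtil_le_one (χ : V → κ) (v : V) : colorUtil G χ v ≤ 1 := by
  have := card_likeNeighborFinset_add_card_unlikeNeighborFinset (G := G) χ v
  exact div_le_one_of_le₀ (by exact_mod_cast (by omega : _ ≤ G.degree v)) (by positivity)

theorem colorUtil_eq_zero_iff {χ : V → κ} {v : V} :
    colorUtil G χ v = 0 ↔ ∀ w, G.Adj v w → χ w ≠ χ v := by
  rw [colorUtil, div_eq_zero_iff, Nat.cast_eq_zero, Nat.cast_eq_zero, card_eq_zero,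
    ← card_neighborFinset_eq_degree, card_eq_zero]
  simp only [likeNeighborFinset, filter_eq_empty_iff, mem_neighborFinset]
  constructor
  · rintro (h | h) w hw
    · exact h hw
    · simp [← mem_neighborFinset, h] at hw
  · exact Or.inl

theorem half_le_colorUtil {χ : V → κ} {u v : V} (hv : 2 ≤ G.degree v)
    (h : ∀ w, G.Adj v w → w ≠ u → χ w = χ v) : 1 / 2 ≤ colorUtil G χ v := by
  have hsub : (G.neighborFinset v).erase u ⊆ likeNeighborFinset G χ v := fun w hw => by
    obtain ⟨hwu, hw⟩ := mem_erase.mp hw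
    exact mem_filter.mpr ⟨hw, h w ((mem_neighborFinset _ _ _).mp hw) hwu⟩
  have hcard : G.degree v ≤ #(likeNeighborFinset G χ v) + 1 := by
    have := (pred_card_le_card_erase (a := u)).trans (card_le_card hsub)
    rw [card_neighborFinset_eq_degree] at this
    omega
  have hcardℚ : (G.degree v : ℚ) ≤ #(likeNeighborFinset G χ v) + 1 := by exact_mod_cast hcard
  have hvℚ : (2 : ℚ) ≤ G.degree v := by exact_mod_cast hv
  rw [colorUtil, le_div_iff₀ (by positivity)]
  linarith

end Coloring

section Swap

variable {V κ : Type*} [Fintype V] [DecidableEq V] (G : SimpleGraph V) [DecidableRel G.Adj]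
  [DecidableEq κ]

/-- Swapping the agents on `x` and `y` turns the colouring `χ` into `χ ∘ swap x y`; the agent
from `x` then sits on `y` and the one from `y` on `x`. -/
def IsLocalSwapStable (χ : V → κ) : Prop :=
  ∀ x y, G.Adj x y → χ x ≠ χ y →
    colorUtil G (χ ∘ Equiv.swap x y) y ≤ colorUtil G χ x ∨
      colorUtil G (χ ∘ Equiv.swap x y) x ≤ colorUtil G χ y

variable {G}

theorem ssgUtil_eq_colorUtil {A : Type*} {k : ℕ} (c : A → Fin k) (τ : A ≃ V) (i : A) :
    ssgUtil G c τ i = colorUtil G (c ∘ τ.symm) (τ i) := by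
  simp [ssgUtil, colorUtil, likeNeighborFinset]

theorem ssgWelfare_eq_sum_colorUtil {A : Type*} [Fintype A] {k : ℕ} (c : A → Fin k)
    (τ : A ≃ V) : ssgWelfare G c τ = ∑ v, colorUtil G (c ∘ τ.symm) v := by
  simp only [ssgWelfare, ssgUtil_eq_colorUtil]
  exact τ.sum_comp _

theorem ssgLocalEquilibrium.isLocalSwapStable {A : Type*} {k : ℕ} {c : A → Fin k} {σ : A ≃ V}
    (h : ssgLocalEquilibrium G c σ) : IsLocalSwapStable G (c ∘ σ.symm) := by
  intro x y hxy hc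
  have hswap : c ∘ (ssgSwap σ (σ.symm x) (σ.symm y)).symm = (c ∘ σ.symm) ∘ Equiv.swap x y := by
    ext; simp [ssgSwap]
  have := h (σ.symm x) (σ.symm y) (by simpa using hxy)
  simp only [ssgProfitable, ssgUtil_eq_colorUtil, hswap, not_and_or, not_lt] at this
  simpa [ssgSwap] using this.resolve_left (not_not.mpr hc)

theorem IsLocalSwapStable.half_le_colorUtil_of_adj {χ : V → Fin 2} (hE : IsLocalSwapStable G χ)
    {x y : V} (hxy : G.Adj x y) (hx : colorUtil G χ x = 0) (hdx : 2 ≤ G.degree x)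
    (hdy : 2 ≤ G.degree y) : 1 / 2 ≤ colorUtil G χ y := by
  have hunlike := colorUtil_eq_zero_iff.mp hx
  have hfin2 {a b c : Fin 2} (hab : a ≠ b) (hca : c ≠ a) : c = b := by omega
  rcases hE x y hxy (hunlike y hxy).symm with hL | hR
  · rw [hx] at hL
    have hL0 := colorUtil_eq_zero_iff.mp (hL.antisymm (colorUtil_nonneg _ _))
    refine half_le_colorUtil (u := x) hdy fun w hyw hwx => hfin2 (hunlike y hxy).symm ?_
    simpa [Equiv.swap_apply_of_ne_of_ne hwx hyw.ne'] using hL0 w hyw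
  · refine le_trans (half_le_colorUtil (u := y) hdx fun w hxw hwy => ?_) hR
    simpa [Equiv.swap_apply_of_ne_of_ne hxw.ne' hwy] using
      hfin2 (hunlike y hxy).symm (hunlike w hxw)

end Swap

section Charging

variable {V κ : Type*} [Fintype V] [DecidableEq V] {G : SimpleGraph V} [DecidableRel G.Adj]
  [DecidableEq κ]

variable (G) in
noncomputable def chargeSet (χ : V → κ) (v : V) : Finset V :=
  if 1 / 2 ≤ colorUtil G χ v then
    (unlikeNeighborFinset G χ v).biUnion fun y => insert y ((G.neighborFinset y).erase v)
  else unlikeNeighborFinset G χ v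

theorem unlikeNeighborFinset_subset_chargeSet (χ : V → κ) (v : V) :
    unlikeNeighborFinset G χ v ⊆ chargeSet G χ v := by
  unfold chargeSet
  split_ifs
  · exact fun y hy => mem_biUnion.mpr ⟨y, hy, mem_insert_self _ _⟩
  · exact subset_rfl

theorem card_chargeSet_le_of_half_le {χ : V → κ} {v : V} (hv : 1 / 2 ≤ colorUtil G χ v) :
    #(chargeSet G χ v) ≤ #(unlikeNeighborFinset G χ v) * G.maxDegree := by
  rw [chargeSet, if_pos hv]
  refine card_biUnion_le.trans (sum_le_card_nsmul _ _ _ fun y hy => ?_)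
  have hvy : v ∈ G.neighborFinset y := by
    simpa [unlikeNeighborFinset, adj_comm] using (mem_filter.mp hy).1
  calc #(insert y ((G.neighborFinset y).erase v))
      ≤ #((G.neighborFinset y).erase v) + 1 := card_insert_le _ _
    _ = G.degree y := by
      rw [card_erase_of_mem hvy, Nat.sub_add_cancel (card_pos.mpr ⟨v, hvy⟩)]
      exact card_neighborFinset_eq_degree _ _
    _ ≤ G.maxDegree := G.degree_le_maxDegree y

theorem one_add_card_chargeSet_le {χ : V → κ} {v : V} (hv : colorUtil G χ v ≠ 0) :
    (1 + #(chargeSet G χ v) : ℚ) ≤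
      2 * ((G.maxDegree : ℚ) ^ 2 - G.maxDegree + 1) * colorUtil G χ v := by
  set s := #(likeNeighborFinset G χ v)
  set t := #(unlikeNeighborFinset G χ v)
  have hdeg := card_likeNeighborFinset_add_card_unlikeNeighborFinset (G := G) χ v
  have hstΔ : (s + t : ℚ) ≤ G.maxDegree := by
    exact_mod_cast hdeg.trans_le (G.degree_le_maxDegree v)
  have hs : (1 : ℚ) ≤ s := by
    have : s ≠ 0 := fun h => hv (by simp [colorUtil, s, h])
    exact_mod_cast Nat.one_le_iff_ne_zero.mpr this
  have ht : (0 : ℚ) ≤ t := t.cast_nonneg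
  have hutil : colorUtil G χ v = s / (s + t) := by rw [colorUtil, ← hdeg]; push_cast; rfl
  rw [hutil, mul_div_assoc', le_div_iff₀ (by linarith)]
  by_cases hhalf : 1 / 2 ≤ colorUtil G χ v
  · have hcard : (#(chargeSet G χ v) : ℚ) ≤ t * G.maxDegree := by
      exact_mod_cast card_chargeSet_le_of_half_le hhalf
    have hts : (t : ℚ) ≤ s := by
      rw [hutil, le_div_iff₀ (by linarith)] at hhalf
      linarith
    have hΔ : (0 : ℚ) ≤ G.maxDegree := by positivity
    nlinarith [mul_nonneg (mul_nonneg (sub_nonneg.mpr hts) ht) hΔ,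
      mul_nonneg (mul_nonneg (sub_nonneg.mpr hstΔ) (by linarith : (0 : ℚ) ≤ s)) hΔ,
      mul_nonneg (mul_nonneg (sub_nonneg.mpr hs) (by linarith : (0 : ℚ) ≤ s)) hΔ]
  · rw [chargeSet, if_neg hhalf]
    nlinarith [sq_nonneg ((G.maxDegree : ℚ) - 1)]

end Charging

section Bound

variable {V : Type*} [Fintype V] [DecidableEq V] {G : SimpleGraph V} [DecidableRel G.Adj]

theorem IsLocalSwapStable.exists_mem_chargeSet {χ : V → Fin 2} (hE : IsLocalSwapStable G χ)
    (hG : G.Connected) (hΔ : G.maxDegree + 2 ≤ Fintype.card V) {u : V} (hu : colorUtil G χ u = 0) :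
    ∃ v, colorUtil G χ v ≠ 0 ∧ u ∈ chargeSet G χ v := by
  have hunlike {x w : V} (hx : colorUtil G χ x = 0) (hxw : G.Adj x w) :
      x ∈ unlikeNeighborFinset G χ w := by
    simpa [unlikeNeighborFinset, adj_comm, eq_comm] using
      And.intro hxw (colorUtil_eq_zero_iff.mp hx w hxw)
  obtain ⟨y, huy, hdy⟩ := hG.exists_adj_two_le_degree hΔ u
  by_cases hy : colorUtil G χ y = 0
  · obtain ⟨z, hyz, hdz⟩ := hG.exists_adj_two_le_degree hΔ y
    have hz := hE.half_le_colorUtil_of_adj hyz hy hdy hdz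
    have hz0 : colorUtil G χ z ≠ 0 := by linarith
    refine ⟨z, hz0, ?_⟩
    rw [chargeSet, if_pos hz]
    refine mem_biUnion.mpr ⟨y, hunlike hy hyz, mem_insert_of_mem (mem_erase.mpr ⟨?_, ?_⟩)⟩
    · rintro rfl; exact hz0 hu
    · simpa [adj_comm] using huy
  · exact ⟨y, hy, unlikeNeighborFinset_subset_chargeSet _ _ (hunlike hu huy)⟩

theorem IsLocalSwapStable.card_le_mul_sum_colorUtil {χ : V → Fin 2} (hE : IsLocalSwapStable G χ)
    (hG : G.Connected) (hΔ : G.maxDegree + 2 ≤ Fintype.card V) :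
    (Fintype.card V : ℚ) ≤
      2 * ((G.maxDegree : ℚ) ^ 2 - G.maxDegree + 1) * ∑ v, colorUtil G χ v := by
  set P : Finset V := {v | colorUtil G χ v ≠ 0}
  have hcover : univ ⊆ P ∪ P.biUnion (chargeSet G χ) := fun u _ => by
    by_cases hu : colorUtil G χ u = 0
    · obtain ⟨v, hv, huv⟩ := hE.exists_mem_chargeSet hG hΔ hu
      exact mem_union_right _ (mem_biUnion.mpr ⟨v, by simpa [P] using hv, huv⟩)
    · exact mem_union_left _ (by simpa [P] using hu)
  have hcard : Fintype.card V ≤ ∑ v ∈ P, (1 + #(chargeSet G χ v)) := by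
    rw [sum_add_distrib, ← card_eq_sum_ones, ← card_univ]
    exact (card_le_card hcover).trans
      ((card_union_le _ _).trans (by gcongr; exact card_biUnion_le))
  calc (Fintype.card V : ℚ) ≤ ∑ v ∈ P, (1 + #(chargeSet G χ v) : ℚ) := by exact_mod_cast hcard
    _ ≤ ∑ v ∈ P, 2 * ((G.maxDegree : ℚ) ^ 2 - G.maxDegree + 1) * colorUtil G χ v :=
      sum_le_sum fun v hv => one_add_card_chargeSet_le (by simpa [P] using hv)
    _ ≤ ∑ v, 2 * ((G.maxDegree : ℚ) ^ 2 - G.maxDegree + 1) * colorUtil G χ v := by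
      refine sum_le_sum_of_subset_of_nonneg (subset_univ _) fun v _ _ => ?_
      have : (0 : ℚ) ≤ (G.maxDegree : ℚ) ^ 2 - G.maxDegree + 1 := by nlinarith
      exact mul_nonneg (by positivity) (colorUtil_nonneg _ _)
    _ = _ := (mul_sum _ _ _).symm

end Bound

theorem stmt10 {V A : Type*} [Fintype V] [DecidableEq V] [Fintype A]
    (G : SimpleGraph V) [DecidableRel G.Adj] (hconn : G.Connected)
    (hΔ2 : 2 ≤ G.maxDegree) (hΔ : G.maxDegree ≤ Fintype.card V - 2)
    (c : A → Fin 2) (σ : A ≃ V) (heq : ssgLocalEquilibrium G c σ) :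
    (Fintype.card A : ℚ) *
        (1 / (2 * ((G.maxDegree : ℚ) ^ 2 - (G.maxDegree : ℚ) + 1))) ≤
      ssgWelfare G c σ ∧
    ∀ σ' : A ≃ V,
      ssgWelfare G c σ' ≤
        4 * ((G.maxDegree : ℚ) ^ 2 - (G.maxDegree : ℚ) + 1) * ssgWelfare G c σ := by
  set C : ℚ := (G.maxDegree : ℚ) ^ 2 - G.maxDegree + 1
  have hC : 0 < C := by
    have : (2 : ℚ) ≤ G.maxDegree := by exact_mod_cast hΔ2
    nlinarith
  have hcardA : (Fintype.card A : ℚ) = Fintype.card V := by exact_mod_cast Fintype.card_congr σ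
  have hbound : (Fintype.card A : ℚ) ≤ 2 * C * ssgWelfare G c σ := by
    rw [hcardA, ssgWelfare_eq_sum_colorUtil]
    exact heq.isLocalSwapStable.card_le_mul_sum_colorUtil hconn (by omega)
  refine ⟨by rw [mul_one_div, div_le_iff₀ (by positivity)]; linarith, fun σ' => ?_⟩
  have hopt : ssgWelfare G c σ' ≤ Fintype.card A := by
    rw [ssgWelfare_eq_sum_colorUtil, hcardA]
    simpa using sum_le_card_nsmul univ _ 1 fun v _ => colorUtil_le_one (c ∘ σ'.symm) v
  have hW : 0 ≤ ssgWelfare G c σ := by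
    rw [ssgWelfare_eq_sum_colorUtil]; exact sum_nonneg fun v _ => colorUtil_nonneg _ v
  calc ssgWelfare G c σ' ≤ Fintype.card A := hopt
    _ ≤ 2 * C * ssgWelfare G c σ := hbound
    _ ≤ 4 * C * ssgWelfare G c σ := by gcongr; norm_num
end

section
/- For 2-type Swap Schelling Games on a cycle with n ≥ 3 vertices, o = 2α + β orange agents (α ∈ ℕ, β ∈ {0,1}, 2 ≤ o ≤ b = n − o), the Price of Anarchy equals (n−2)/(b+β): the optimal social welfare is n − 2, and every swap equilibrium has social welfare at least b + β, with this bound attained. -/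
open SimpleGraph Finset
open scoped Classical

noncomputable instance (n : ℕ) : DecidableRel (SimpleGraph.cycleGraph n).Adj :=
  Classical.decRel _

/-!
On the cycle an agent's utility is half the number of its same-coloured neighbours, so the social
welfare is the number of monochromatic edges, `n - 2 r`, where `r` is the number of maximal orange
runs. Both colours occur, so `r ≥ 1`, with equality for a single orange block.

In a swap equilibrium no orange agent is isolated: it could swap with the blue agent just after
the end of another orange run, and both would strictly gain. Hence every orange run has at least
two vertices, `r ≤ ⌊o / 2⌋`, and the welfare is at least `n - 2 ⌊o / 2⌋ = b + β`. Orange pairs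
separated by blue pairs (with one orange triple when `o` is odd) attain this bound, and form an
equilibrium because every agent already has a same-coloured neighbour, which no swap can improve
on for both partners.
-/

namespace CycleSchelling

section Runs

variable {n : ℕ} [NeZero n]

def runEnds (p : Fin n → Prop) [DecidablePred p] : Finset (Fin n) := {v | p v ∧ ¬p (v + 1)}

open Fin.NatCast in
theorem runEnds_nonempty {p : Fin n → Prop} [DecidablePred p] {u w : Fin n} (hu : p u)
    (hw : ¬p w) : (runEnds p).Nonempty := by
  by_contra hempty
  have hclosed : ∀ v, p v → p (v + 1) := fun v hv =>
    by_contra fun hv' => hempty ⟨v, mem_filter.2 ⟨mem_univ v, hv, hv'⟩⟩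
  have hiter : ∀ k : ℕ, p (u + k) := fun k => by
    induction k with
    | zero => simpa using hu
    | succ k ih => simpa [Nat.cast_succ, add_assoc] using hclosed _ ih
  exact hw (by simpa using hiter (w - u).val)

theorem card_runEnds (p : Fin n → Prop) [DecidablePred p] :
    #(runEnds p) = #{v | ¬p v ∧ p (v + 1)} := by
  have hstarts : univ.filter (fun v => ¬p v ∧ p (v + 1)) =
      univ.filter (fun v => p (v + 1)) \ univ.filter p := by
    ext v; simp [and_comm]
  rw [runEnds, filter_and_not, hstarts, card_sdiff_eq_card_sdiff_iff]
  exact (card_equiv (Equiv.addRight 1) (by simp)).symm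

theorem two_mul_card_runEnds_le {p : Fin n → Prop} [DecidablePred p]
    (h : ∀ v, p v → p (v - 1) ∨ p (v + 1)) : 2 * #(runEnds p) ≤ #{v | p v} := by
  -- the run ends and their predecessors are disjoint sets of vertices satisfying `p`
  set s := (runEnds p).map (Equiv.subRight 1).toEmbedding
  have hdisj : Disjoint (runEnds p) s := by
    simp only [Finset.disjoint_left, s, mem_map_equiv, runEnds, mem_filter, mem_univ, true_and]
    intro v hv hv'
    exact hv.2 (by simpa using hv'.1)
  have hsub : runEnds p ∪ s ⊆ ({v | p v} : Finset (Fin n)) := by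
    intro v
    simp only [mem_union, s, mem_map_equiv, runEnds, mem_filter, mem_univ, true_and]
    rintro (hv | hv)
    · exact hv.1
    · simpa using (h _ hv.1).resolve_right hv.2
  calc 2 * #(runEnds p) = #(runEnds p ∪ s) := by rw [card_union_of_disjoint hdisj, card_map]; ring
    _ ≤ _ := card_le_card hsub

theorem card_filter_ne_add_one (d : Fin n → Fin 2) :
    #{v | d v ≠ d (v + 1)} = 2 * #(runEnds (d · = 0)) := by
  have hsplit : ({v | d v ≠ d (v + 1)} : Finset (Fin n)) =
      runEnds (d · = 0) ∪ ({v | ¬d v = 0 ∧ d (v + 1) = 0} : Finset (Fin n)) := by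
    ext v; simp only [runEnds, mem_filter, mem_univ, true_and, mem_union]; omega
  have hstarts := card_runEnds (d · = 0)
  rw [hsplit, card_union_of_disjoint]
  · omega
  · simp only [runEnds, disjoint_filter]; tauto

end Runs

section Cycle

variable {m k : ℕ} {A : Type*}

theorem sub_one_ne_add_one (v : Fin (m + 3)) : v - 1 ≠ v + 1 := by
  simp only [ne_eq, sub_eq_iff_eq_add, add_assoc, left_eq_add]
  -- `1 + 1 ≠ 0` in `Fin (m + 3)`, decided by evaluation
  exact ne_of_beq_false rfl

def nbrCount {κ : Type*} [DecidableEq κ] (d : Fin (m + 3) → κ) (v : Fin (m + 3)) (x : κ) : ℕ :=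
  (if d (v - 1) = x then 1 else 0) + (if d (v + 1) = x then 1 else 0)

section nbrCount

variable {κ : Type*} [DecidableEq κ] {d : Fin (m + 3) → κ} {v : Fin (m + 3)} {x : κ}

theorem one_le_nbrCount_iff : 1 ≤ nbrCount d v x ↔ d (v - 1) = x ∨ d (v + 1) = x := by
  unfold nbrCount; split_ifs <;> simp_all

theorem nbrCount_le_one_iff : nbrCount d v x ≤ 1 ↔ d (v - 1) ≠ x ∨ d (v + 1) ≠ x := by
  unfold nbrCount; split_ifs <;> simp_all

theorem nbrCount_eq_zero_iff : nbrCount d v x = 0 ↔ d (v - 1) ≠ x ∧ d (v + 1) ≠ x := by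
  unfold nbrCount; split_ifs <;> simp_all

theorem nbrCount_eq_two_iff : nbrCount d v x = 2 ↔ d (v - 1) = x ∧ d (v + 1) = x := by
  unfold nbrCount; split_ifs <;> simp_all

end nbrCount

theorem ssgUtil_cycleGraph (c : A → Fin k) (σ : A ≃ Fin (m + 3)) (i : A) :
    ssgUtil (cycleGraph (m + 3)) c σ i = (nbrCount (c ∘ σ.symm) (σ i) (c i) : ℚ) / 2 := by
  have hnbr : (cycleGraph (m + 3)).neighborFinset (σ i) = {σ i - 1, σ i + 1} := by
    ext w
    rw [mem_neighborFinset, ← mem_neighborSet, cycleGraph_neighborSet (n := m + 1)]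
    simp
  have hdeg : (cycleGraph (m + 3)).degree (σ i) = 2 := by
    rw [← card_neighborFinset_eq_degree, hnbr, card_pair (sub_one_ne_add_one _)]
  rw [ssgUtil, hdeg, hnbr, filter_insert, filter_singleton, nbrCount]
  split_ifs <;> simp_all [sub_one_ne_add_one]

theorem ssgProfitable_cycleGraph_iff (c : A → Fin k) (σ : A ≃ Fin (m + 3)) (i j : A) :
    ssgProfitable (cycleGraph (m + 3)) c σ i j ↔ c i ≠ c j ∧
      nbrCount (c ∘ σ.symm) (σ i) (c i) <
        nbrCount (c ∘ σ.symm ∘ Equiv.swap (σ i) (σ j)) (σ j) (c i) ∧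
      nbrCount (c ∘ σ.symm) (σ j) (c j) <
        nbrCount (c ∘ σ.symm ∘ Equiv.swap (σ i) (σ j)) (σ i) (c j) := by
  simp [ssgProfitable, ssgUtil_cycleGraph, ssgSwap, div_lt_div_iff_of_pos_right]

theorem ssgEquilibrium_of_forall_nbr_eq (c : A → Fin k) (σ : A ≃ Fin (m + 3))
    (h : ∀ v, c (σ.symm (v - 1)) = c (σ.symm v) ∨ c (σ.symm (v + 1)) = c (σ.symm v)) :
    ssgEquilibrium (cycleGraph (m + 3)) c σ := by
  rintro i j hij
  obtain ⟨hne, hi, -⟩ := (ssgProfitable_cycleGraph_iff c σ i j).1 hij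
  have hold : 1 ≤ nbrCount (c ∘ σ.symm) (σ i) (c i) := by
    simpa [one_le_nbrCount_iff] using h (σ i)
  -- the neighbour of `σ j` that shares its colour is not `σ i`, so the swap leaves it in place
  have hnew : nbrCount (c ∘ σ.symm ∘ Equiv.swap (σ i) (σ j)) (σ j) (c i) ≤ 1 := by
    have hj := h (σ j)
    simp only [Equiv.symm_apply_apply] at hj
    rw [nbrCount_le_one_iff]
    rcases hj with hj | hj
    · left
      have : σ j - 1 ≠ σ i := fun h' => hne (by simpa [h'] using hj)
      simp [Equiv.swap_apply_of_ne_of_ne this (by simp : σ j - 1 ≠ σ j), hj, Ne.symm hne]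
    · right
      have : σ j + 1 ≠ σ i := fun h' => hne (by simpa [h'] using hj)
      simp [Equiv.swap_apply_of_ne_of_ne this (by simp : σ j + 1 ≠ σ j), hj, Ne.symm hne]
  omega

theorem not_ssgEquilibrium_of_isolated (c : A → Fin k) (σ : A ≃ Fin (m + 3)) {x y : Fin k}
    (hxy : x ≠ y) {v q : Fin (m + 3)} (hv : c (σ.symm v) = x) (hvl : c (σ.symm (v - 1)) = y)
    (hvr : c (σ.symm (v + 1)) = y) (hq : c (σ.symm q) = y) (hql : c (σ.symm (q - 1)) = x)
    (hqv : q - 1 ≠ v) : ¬ssgEquilibrium (cycleGraph (m + 3)) c σ := by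
  intro heq
  apply heq (σ.symm v) (σ.symm q)
  rw [ssgProfitable_cycleGraph_iff]
  simp only [Equiv.apply_symm_apply, hv, hq]
  have hvr_q : v + 1 ≠ q := by rintro rfl; simp at hqv
  have hold_i : nbrCount (c ∘ σ.symm) v x = 0 := by
    simp [nbrCount_eq_zero_iff, hvl, hvr, Ne.symm hxy]
  have hnew_i : 1 ≤ nbrCount (c ∘ σ.symm ∘ Equiv.swap v q) q x := by
    rw [one_le_nbrCount_iff]
    left
    simp [Equiv.swap_apply_of_ne_of_ne hqv (by simp : q - 1 ≠ q), hql]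
  refine ⟨hxy, by omega, ?_⟩
  -- if `q = v - 1` the partner had no like neighbour before; otherwise it gets two afterwards
  rcases eq_or_ne q (v - 1) with rfl | hql_v
  · have hold_j : nbrCount (c ∘ σ.symm) (v - 1) y = 0 := by
      simp [nbrCount_eq_zero_iff, hql, hv, hxy]
    have hnew_j : 1 ≤ nbrCount (c ∘ σ.symm ∘ Equiv.swap v (v - 1)) v y := by
      rw [one_le_nbrCount_iff]
      right
      simp [Equiv.swap_apply_of_ne_of_ne (by simp : v + 1 ≠ v) hvr_q, hvr]
    omega
  · have hold_j : nbrCount (c ∘ σ.symm) q y ≤ 1 := by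
      simp [nbrCount_le_one_iff, hql, hxy]
    have hnew_j : nbrCount (c ∘ σ.symm ∘ Equiv.swap v q) v y = 2 := by
      rw [nbrCount_eq_two_iff]
      simp [Equiv.swap_apply_of_ne_of_ne (by simp : v - 1 ≠ v) (Ne.symm hql_v),
        Equiv.swap_apply_of_ne_of_ne (by simp : v + 1 ≠ v) hvr_q, hvl, hvr]
    omega

theorem nbr_eq_of_ssgEquilibrium (c : A → Fin 2) (σ : A ≃ Fin (m + 3))
    (hσ : ssgEquilibrium (cycleGraph (m + 3)) c σ) {x : Fin 2}
    (hx : 2 ≤ #{v | c (σ.symm v) = x}) {v : Fin (m + 3)} (hv : c (σ.symm v) = x) :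
    c (σ.symm (v - 1)) = x ∨ c (σ.symm (v + 1)) = x := by
  by_contra! hiso
  obtain ⟨u, hu, huv⟩ := exists_mem_ne hx v
  obtain ⟨q, hq⟩ := runEnds_nonempty (p := fun w => c (σ.symm w) = x ∧ w ≠ v)
    (u := u) ⟨(mem_filter.1 hu).2, huv⟩ (fun h => h.2 rfl)
  simp only [runEnds, mem_filter, mem_univ, true_and, not_and, not_not] at hq
  have hqv : q + 1 ≠ v := by
    rintro rfl
    exact hiso.1 (by simpa using hq.1.1)
  have hq_succ := mt hq.2 hqv
  refine not_ssgEquilibrium_of_isolated c σ (y := c (σ.symm (v - 1))) (q := q + 1)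
    (Ne.symm hiso.1) hv rfl (by omega) (by omega) (by simpa using hq.1.1) (by simpa using hq.1.2)
    hσ

theorem sum_nbrCount_self {κ : Type*} [DecidableEq κ] (d : Fin (m + 3) → κ) :
    ∑ v, nbrCount d v (d v) = 2 * #{v | d v = d (v + 1)} := by
  have hback : ∑ v, (if d (v - 1) = d v then 1 else 0) = #{v | d v = d (v + 1)} := by
    rw [card_filter,
      ← Equiv.sum_comp (Equiv.addRight 1) (fun v => if d (v - 1) = d v then 1 else 0)]
    simp
  have hfwd : ∑ v, (if d (v + 1) = d v then 1 else 0) = #{v | d v = d (v + 1)} := by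
    rw [card_filter]
    exact sum_congr rfl fun v _ => if_congr eq_comm rfl rfl
  simp only [nbrCount, sum_add_distrib, hback, hfwd]
  ring

theorem ssgWelfare_cycleGraph [Fintype A] (c : A → Fin k) (σ : A ≃ Fin (m + 3)) :
    ssgWelfare (cycleGraph (m + 3)) c σ = #{v | c (σ.symm v) = c (σ.symm (v + 1))} := by
  have hsum : ∑ i, nbrCount (c ∘ σ.symm) (σ i) (c i) =
      ∑ v, nbrCount (c ∘ σ.symm) v ((c ∘ σ.symm) v) := by
    rw [← σ.sum_comp]
    simp
  rw [ssgWelfare, sum_congr rfl fun i _ => ssgUtil_cycleGraph c σ i, ← sum_div, ← Nat.cast_sum,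
    hsum, sum_nbrCount_self]
  simp only [Function.comp_apply]
  push_cast
  ring

theorem ssgWelfare_cycleGraph_eq_sub [Fintype A] (c : A → Fin 2) (σ : A ≃ Fin (m + 3)) :
    ssgWelfare (cycleGraph (m + 3)) c σ =
      ((m + 3 : ℕ) : ℚ) - 2 * #(runEnds (fun v => c (σ.symm v) = 0)) := by
  have hsplit := card_filter_add_card_filter_not (s := univ)
    (fun v : Fin (m + 3) => c (σ.symm v) = c (σ.symm (v + 1)))
  have hbreaks := card_filter_ne_add_one (c ∘ σ.symm)
  simp only [card_univ, Fintype.card_fin, Function.comp_apply, ne_eq] at hsplit hbreaks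
  rw [ssgWelfare_cycleGraph, eq_sub_iff_add_eq]
  exact_mod_cast (by omega)

end Cycle

section Realize

variable {A V : Type*} [Fintype A] [Fintype V]

theorem card_filter_comp_symm {β : Type*} [DecidableEq β] (c : A → β) (σ : A ≃ V) (x : β) :
    #{v | c (σ.symm v) = x} = #{a | c a = x} :=
  card_equiv σ.symm (by simp)

theorem exists_equiv_comp_symm_eq (hAV : Fintype.card A = Fintype.card V) (c : A → Fin 2)
    (d : V → Fin 2) (h : #{a | c a = 0} = #{v | d v = 0}) :
    ∃ σ : A ≃ V, ∀ v, c (σ.symm v) = d v := by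
  have hA := card_filter_add_card_filter_not (s := univ) (c · = 0)
  have hV := card_filter_add_card_filter_not (s := univ) (d · = 0)
  have hne_zero : ∀ y : Fin 2, ¬y = 0 ↔ y = 1 := by omega
  simp only [card_univ, hne_zero] at hA hV
  have hfib : ∀ x, Fintype.card {a // c a = x} = Fintype.card {v // d v = x} := by
    intro x
    rw [Fintype.card_subtype, Fintype.card_subtype]
    rcases Fin.exists_fin_two.mp ⟨x, rfl⟩ with rfl | rfl <;> omega
  let σ : A ≃ V := Equiv.ofFiberEquiv fun x => Fintype.equivOfCardEq (hfib x)
  refine ⟨σ, fun v => ?_⟩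
  have hσ := Equiv.ofFiberEquiv_map (fun x => Fintype.equivOfCardEq (hfib x)) (σ.symm v)
  rw [Equiv.apply_symm_apply] at hσ
  exact hσ.symm

end Realize

section Colorings

variable {m : ℕ}

theorem val_add_one_eq_ite (v : Fin (m + 3)) :
    (v + 1).val = if v.val = m + 2 then 0 else v.val + 1 := by
  simp [Fin.val_add_one, Fin.ext_iff]

theorem val_sub_one_eq_ite (v : Fin (m + 3)) :
    (v - 1).val = if v.val = 0 then m + 2 else v.val - 1 := by
  rw [Fin.coe_sub_one]
  exact if_congr Fin.val_eq_zero_iff.symm rfl rfl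

def blockColoring (n o : ℕ) (v : Fin n) : Fin 2 := if v.val < o then 0 else 1

theorem blockColoring_eq_zero {n o : ℕ} {v : Fin n} : blockColoring n o v = 0 ↔ v.val < o := by
  unfold blockColoring; split_ifs <;> simp_all

theorem card_blockColoring {n o : ℕ} (ho : o ≤ n) : #{v | blockColoring n o v = 0} = o := by
  simpa [blockColoring_eq_zero, min_eq_right ho] using Fin.card_filter_val_lt (n := n) (m := o)

theorem card_runEnds_blockColoring_le {o : ℕ} (ho : o < m + 3) :
    #(runEnds (blockColoring (m + 3) o · = 0)) ≤ 1 := by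
  refine card_le_one.2 fun v hv w hw => ?_
  simp only [runEnds, blockColoring_eq_zero, mem_filter, mem_univ, true_and] at hv hw
  have hv1 := val_add_one_eq_ite v
  have hw1 := val_add_one_eq_ite w
  ext
  split_ifs at hv1 hw1 <;> omega

/-- Orange pairs `{4t, 4t + 1}` for `t < o / 2`, separated by blue pairs; for odd `o` the last
vertex joins the pair `{0, 1}` to an orange triple. -/
def pairColoring (n o : ℕ) (v : Fin n) : Fin 2 :=
  if (v.val < 4 * (o / 2) ∧ v.val % 4 < 2) ∨ (o % 2 = 1 ∧ v.val = n - 1) then 0 else 1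

theorem pairColoring_eq_zero {n o : ℕ} {v : Fin n} :
    pairColoring n o v = 0 ↔
      (v.val < 4 * (o / 2) ∧ v.val % 4 < 2) ∨ (o % 2 = 1 ∧ v.val = n - 1) := by
  unfold pairColoring; split_ifs <;> simp_all

theorem card_pairColoring {n o : ℕ} (ho : 2 * o ≤ n) : #{v | pairColoring n o v = 0} = o := by
  refine (card_nbij (t := range o)
    (fun v => if v.val < 4 * (o / 2) then 2 * (v.val / 4) + v.val % 4 else o - 1)
    ?_ ?_ ?_).trans (card_range o)
  · intro v hv
    simp only [coe_filter, pairColoring_eq_zero, mem_univ, true_and, Set.mem_ofPred_eq, coe_range,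
      Set.mem_Iio] at hv ⊢
    split_ifs <;> omega
  · intro v hv w hw hvw
    simp only [coe_filter, pairColoring_eq_zero, mem_univ, true_and, Set.mem_ofPred_eq] at hv hw hvw
    ext
    split_ifs at hvw <;> omega
  · intro t ht
    simp only [coe_range, Set.mem_Iio] at ht
    refine ⟨⟨if t < 2 * (o / 2) then 4 * (t / 2) + t % 2 else n - 1, by split_ifs <;> omega⟩,
      ?_, ?_⟩
    · simp only [coe_filter, pairColoring_eq_zero, mem_univ, true_and, Set.mem_ofPred_eq]
      split_ifs <;> omega
    · dsimp only
      split_ifs <;> omega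

theorem pairColoring_nbr_eq {o : ℕ} (ho : 2 ≤ o) (hon : 2 * o ≤ m + 3) (v : Fin (m + 3)) :
    pairColoring (m + 3) o (v - 1) = pairColoring (m + 3) o v ∨
      pairColoring (m + 3) o (v + 1) = pairColoring (m + 3) o v := by
  have hv1 := val_add_one_eq_ite v
  have hv2 := val_sub_one_eq_ite v
  have hite : ∀ (P Q : Prop) [Decidable P] [Decidable Q],
      ((if P then (0 : Fin 2) else 1) = if Q then 0 else 1) ↔ (P ↔ Q) := by
    intros; split_ifs <;> simp_all
  simp only [pairColoring, hite]
  split_ifs at hv1 hv2 <;> rw [hv1, hv2] <;> omega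

theorem le_card_runEnds_pairColoring {o : ℕ} (hon : 2 * o ≤ m + 3) :
    o / 2 ≤ #(runEnds (pairColoring (m + 3) o · = 0)) := by
  refine (card_range (o / 2)).symm.trans_le
    (card_le_card_of_surjOn (fun v => v.val / 4) fun t ht => ?_)
  simp only [coe_range, Set.mem_Iio] at ht
  have hval : ((⟨4 * t + 1, by omega⟩ : Fin (m + 3)) + 1).val = 4 * t + 2 := by
    rw [val_add_one_eq_ite, if_neg (by dsimp only; omega)]
  refine ⟨⟨4 * t + 1, by omega⟩, ?_, by dsimp only; omega⟩
  simp only [runEnds, coe_filter, pairColoring_eq_zero, mem_univ, true_and, Set.mem_ofPred_eq, hval]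
  omega

end Colorings

section Bounds

variable {m : ℕ} {A : Type*} [Fintype A]

theorem ssgWelfare_le (c : A → Fin 2) (σ : A ≃ Fin (m + 3)) (h0 : 0 < #{a | c a = 0})
    (h1 : #{a | c a = 0} < m + 3) :
    ssgWelfare (cycleGraph (m + 3)) c σ ≤ ((m + 3 : ℕ) : ℚ) - 2 := by
  rw [← card_filter_comp_symm c σ] at h0 h1
  obtain ⟨u, hu⟩ := card_pos.1 h0
  obtain ⟨w, -, hw⟩ :=
    exists_mem_notMem_of_card_lt_card (s := {v | c (σ.symm v) = 0}) (t := univ) (by simpa using h1)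
  have hruns := (runEnds_nonempty (p := fun v => c (σ.symm v) = 0) (mem_filter.1 hu).2
    (by simpa using hw)).card_pos
  rw [ssgWelfare_cycleGraph_eq_sub]
  have : (1 : ℚ) ≤ #(runEnds (fun v => c (σ.symm v) = 0)) := by exact_mod_cast hruns
  linarith

theorem exists_ssgWelfare_eq (c : A → Fin 2) (hA : Fintype.card A = m + 3)
    (h0 : 0 < #{a | c a = 0}) (h1 : #{a | c a = 0} < m + 3) :
    ∃ σ : A ≃ Fin (m + 3), ssgWelfare (cycleGraph (m + 3)) c σ = ((m + 3 : ℕ) : ℚ) - 2 := by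
  obtain ⟨σ, hσ⟩ := exists_equiv_comp_symm_eq (by simp [hA]) c (blockColoring (m + 3) _)
    (card_blockColoring h1.le).symm
  refine ⟨σ, ?_⟩
  have hruns : #(runEnds (fun v => c (σ.symm v) = 0)) = 1 := by
    simp only [hσ]
    refine le_antisymm (card_runEnds_blockColoring_le h1) (Nonempty.card_pos ?_)
    exact runEnds_nonempty (u := 0) (w := Fin.last _) (blockColoring_eq_zero.2 h0)
      (by rw [blockColoring_eq_zero, Fin.val_last]; omega)
  rw [ssgWelfare_cycleGraph_eq_sub, hruns]
  norm_num

theorem le_ssgWelfare_of_ssgEquilibrium (c : A → Fin 2) (σ : A ≃ Fin (m + 3))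
    (hσ : ssgEquilibrium (cycleGraph (m + 3)) c σ) (h0 : 2 ≤ #{a | c a = 0}) :
    ((m + 3 : ℕ) : ℚ) - 2 * (#{a | c a = 0} / 2 : ℕ) ≤ ssgWelfare (cycleGraph (m + 3)) c σ := by
  rw [← card_filter_comp_symm c σ] at h0 ⊢
  have hruns := two_mul_card_runEnds_le (p := fun v => c (σ.symm v) = 0)
    fun v hv => nbr_eq_of_ssgEquilibrium c σ hσ h0 hv
  rw [ssgWelfare_cycleGraph_eq_sub]
  have : (#(runEnds (fun v => c (σ.symm v) = 0)) : ℚ) ≤ (#{v | c (σ.symm v) = 0} / 2 : ℕ) := by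
    exact_mod_cast (by omega)
  linarith

theorem exists_ssgEquilibrium_ssgWelfare_le (c : A → Fin 2) (hA : Fintype.card A = m + 3)
    (h0 : 2 ≤ #{a | c a = 0}) (h1 : 2 * #{a | c a = 0} ≤ m + 3) :
    ∃ σ : A ≃ Fin (m + 3), ssgEquilibrium (cycleGraph (m + 3)) c σ ∧
      ssgWelfare (cycleGraph (m + 3)) c σ ≤ ((m + 3 : ℕ) : ℚ) - 2 * (#{a | c a = 0} / 2 : ℕ) := by
  obtain ⟨σ, hσ⟩ := exists_equiv_comp_symm_eq (by simp [hA]) c (pairColoring (m + 3) _)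
    (card_pairColoring h1).symm
  refine ⟨σ, ssgEquilibrium_of_forall_nbr_eq c σ fun v => ?_, ?_⟩
  · simpa only [hσ] using pairColoring_nbr_eq h0 h1 v
  · have hruns := le_card_runEnds_pairColoring h1
    simp only [← hσ] at hruns
    rw [ssgWelfare_cycleGraph_eq_sub]
    have : ((#{a | c a = 0} / 2 : ℕ) : ℚ) ≤ #(runEnds (fun v => c (σ.symm v) = 0)) := by
      exact_mod_cast hruns
    linarith

end Bounds

end CycleSchelling

open CycleSchelling in
theorem stmt13_general (n o b α β : ℕ)
    (c : Fin n → Fin 2)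
    (ho : o = (Finset.univ.filter (fun i : Fin n => c i = 0)).card)
    (hb : b = n - o) (hoab : o = 2 * α + β) (hβ : β ≤ 1)
    (ho2 : 2 ≤ o) (hmin : o ≤ b) :
    (∀ σ : Fin n ≃ Fin n,
      ssgWelfare (SimpleGraph.cycleGraph n) c σ ≤ (n : ℚ) - 2) ∧
    (∃ σ : Fin n ≃ Fin n,
      ssgWelfare (SimpleGraph.cycleGraph n) c σ = (n : ℚ) - 2) ∧
    (∀ σ : Fin n ≃ Fin n, ssgEquilibrium (SimpleGraph.cycleGraph n) c σ →
      (b : ℚ) + (β : ℚ) ≤ ssgWelfare (SimpleGraph.cycleGraph n) c σ) ∧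
    (∃ σ : Fin n ≃ Fin n, ssgEquilibrium (SimpleGraph.cycleGraph n) c σ ∧
      ssgWelfare (SimpleGraph.cycleGraph n) c σ = (b : ℚ) + (β : ℚ)) := by
  obtain ⟨m, rfl⟩ : ∃ m, n = m + 3 := ⟨n - 3, by omega⟩
  have hA : Fintype.card (Fin (m + 3)) = m + 3 := Fintype.card_fin _
  have hlower : ((m + 3 : ℕ) : ℚ) - 2 * (#{i | c i = 0} / 2 : ℕ) = b + β := by
    rw [← ho, sub_eq_iff_eq_add]
    exact_mod_cast (by omega)
  rw [← hlower]
  refine ⟨fun σ => ssgWelfare_le c σ (by omega) (by omega),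
    exists_ssgWelfare_eq c hA (by omega) (by omega),
    fun σ hσ => le_ssgWelfare_of_ssgEquilibrium c σ hσ (by omega), ?_⟩
  obtain ⟨σ, hσ, hle⟩ := exists_ssgEquilibrium_ssgWelfare_le c hA (by omega) (by omega)
  exact ⟨σ, hσ, hle.antisymm (le_ssgWelfare_of_ssgEquilibrium c σ hσ (by omega))⟩

theorem stmt13 (n o b α β : ℕ) (hn : 3 ≤ n)
    (c : Fin n → Fin 2)
    (ho : o = (Finset.univ.filter (fun i : Fin n => c i = 0)).card)
    (hb : b = n - o) (hoab : o = 2 * α + β) (hβ : β ≤ 1)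
    (ho2 : 2 ≤ o) (hmin : o ≤ b) :
    (∀ σ : Fin n ≃ Fin n,
      ssgWelfare (SimpleGraph.cycleGraph n) c σ ≤ (n : ℚ) - 2) ∧
    (∃ σ : Fin n ≃ Fin n,
      ssgWelfare (SimpleGraph.cycleGraph n) c σ = (n : ℚ) - 2) ∧
    (∀ σ : Fin n ≃ Fin n, ssgEquilibrium (SimpleGraph.cycleGraph n) c σ →
      (b : ℚ) + (β : ℚ) ≤ ssgWelfare (SimpleGraph.cycleGraph n) c σ) ∧
    (∃ σ : Fin n ≃ Fin n, ssgEquilibrium (SimpleGraph.cycleGraph n) c σ ∧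
      ssgWelfare (SimpleGraph.cycleGraph n) c σ = (b : ℚ) + (β : ℚ)) :=
  stmt13_general n o b α β c ho hb hoab hβ ho2 hmin
end
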